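/- arXiv:0803.1083 — 10 statements merged into one kernel-verified Lean document; each statement's English description precedes it below -/
import Mathlib

section
/- Let γ₁, γ₂ be positive semi-definite operators and E a positive semi-definite operator with 𝟙 - E ≥ 0 and γ₁(𝟙 - E)γ₂ = 0. Then (𝟙 - E)Π∥ = 0, where Π∥ is the orthogonal projector onto supp γ₁ ∩ supp γ₂. -/
open Matrix ComplexOrder

/-- If `0 ≤ E ≤ 𝟙` and `γ₁(𝟙-E)γ₂ = 0` for positive semi-definite `γ₁, γ₂`, then
`(𝟙-E) Π∥ = 0`, where `Π∥` is the orthogonal projector onto `supp γ₁ ∩ supp γ₂`. -/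
theorem stmt_3 {n : ℕ} (γ₁ γ₂ E : Matrix (Fin n) (Fin n) ℂ)
    (hγ₁ : γ₁.PosSemidef) (hγ₂ : γ₂.PosSemidef)
    (hE : E.PosSemidef) (hE' : (1 - E).PosSemidef)
    (h : γ₁ * (1 - E) * γ₂ = 0) :
    (Matrix.toEuclideanLin (1 - E)) ∘ₗ
      ((LinearMap.range (Matrix.toEuclideanLin γ₁)
          ⊓ LinearMap.range (Matrix.toEuclideanLin γ₂)).subtypeL.comp
        (Submodule.orthogonalProjectionOnto
          (LinearMap.range (Matrix.toEuclideanLin γ₁)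
            ⊓ LinearMap.range (Matrix.toEuclideanLin γ₂)))).toLinearMap = 0 := by
  apply LinearMap.ext; intro x
  simp only [LinearMap.comp_apply, ContinuousLinearMap.coe_coe,
    ContinuousLinearMap.comp_apply, Submodule.coe_subtypeL', Submodule.coe_subtype,
    LinearMap.zero_apply]
  set S := LinearMap.range (Matrix.toEuclideanLin γ₁) ⊓ LinearMap.range (Matrix.toEuclideanLin γ₂) with hS
  obtain ⟨⟨u, hu⟩, v, hv⟩ := (Submodule.orthogonalProjectionOnto S x).2
  set y : EuclideanSpace ℂ (Fin n) := (Submodule.orthogonalProjectionOnto S x : EuclideanSpace ℂ (Fin n))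
  -- show (1-E) *ᵥ y' = 0 where y' = equiv y
  have key : (1 - E) *ᵥ (WithLp.equiv 2 (Fin n → ℂ) y) = 0 := by
    apply (hE'.dotProduct_mulVec_zero_iff _).mp
    have h1 : (WithLp.equiv 2 (Fin n → ℂ)) y = γ₁ *ᵥ (WithLp.equiv 2 _ u) := by
      rw [← hu]; rfl
    have h2 : (WithLp.equiv 2 (Fin n → ℂ)) y = γ₂ *ᵥ (WithLp.equiv 2 _ v) := by
      rw [← hv]; rfl
    nth_rewrite 1 [h1]
    nth_rewrite 1 [h2]
    rw [star_mulVec, ← dotProduct_mulVec, mulVec_mulVec, mulVec_mulVec,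
      hγ₁.isHermitian.eq, h]
    simp
  have : Matrix.toEuclideanLin (1 - E) y = 0 := by
    rw [toEuclideanLin_apply, show (1 - E) *ᵥ y.ofLp = 0 from key]; rfl
  exact this
end

section
/- Let X be an operator on a finite-dimensional Hilbert space and (Π_k) a finite family of orthogonal projectors with ker(Σ_k Π_k) = {0} and Π_k X Π_l = 0 for all k ≠ l. Then ker X = Σ_k (ker X ∩ Π_k H), i.e., the kernel of X is the sum of its intersections with the ranges of the projectors. -/
open Matrix

/-! Writing `S = Σ_k Π_k`, the off-diagonal condition gives `S X Π_k = Π_k X Π_k = Π_k X S`.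
Since `S` is invertible, every `x ∈ ker X` is `S y = Σ_k Π_k y` for some `y`, and
`S (X Π_k y) = Π_k X x = 0` forces `X Π_k y = 0`; so `x` is a sum of vectors of
`ker X ∩ Π_k H`. -/

theorem sum_mul_mul_eq_mul_mul_sum {R ι : Type*} [Semiring R] [Fintype ι] (p : ι → R) (x : R)
    (hoff : ∀ k l, k ≠ l → p k * x * p l = 0) (k : ι) :
    (∑ l, p l) * (x * p k) = p k * (x * ∑ l, p l) := by
  calc (∑ l, p l) * (x * p k) = ∑ l, p l * x * p k := by simp only [Finset.sum_mul, mul_assoc]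
    _ = p k * x * p k := Fintype.sum_eq_single k fun l hl ↦ hoff l k hl
    _ = ∑ l, p k * x * p l := (Fintype.sum_eq_single k fun l hl ↦ hoff k l (Ne.symm hl)).symm
    _ = p k * (x * ∑ l, p l) := by simp only [Finset.mul_sum, mul_assoc]

theorem Module.End.ker_eq_iSup_ker_inf_range {R V ι : Type*} [Semiring R] [AddCommMonoid V]
    [Module R V] [Fintype ι] (X : Module.End R V) (P : ι → Module.End R V)
    (hS : IsUnit (∑ k, P k)) (hoff : ∀ k l, k ≠ l → P k * X * P l = 0) :
    LinearMap.ker X = ⨆ k, (LinearMap.ker X ⊓ LinearMap.range (P k)) := by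
  refine le_antisymm (fun x hx ↦ ?_) (iSup_le fun _ ↦ inf_le_left)
  obtain ⟨hSinj, hSsurj⟩ := (Module.End.isUnit_iff _).mp hS
  obtain ⟨y, rfl⟩ := hSsurj x
  rw [LinearMap.sum_apply]
  refine Submodule.sum_mem _ fun k _ ↦ Submodule.mem_iSup_of_mem k ⟨?_, y, rfl⟩
  have hXPy : (∑ l, P l) (X (P k y)) = (∑ l, P l) 0 := by
    rw [map_zero]
    calc (∑ l, P l) (X (P k y)) = ((∑ l, P l) * (X * P k)) y := rfl
      _ = (P k * (X * ∑ l, P l)) y := by rw [sum_mul_mul_eq_mul_mul_sum P X hoff k]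
      _ = 0 := by simp only [Module.End.mul_apply, LinearMap.mem_ker.mp hx, map_zero]
  exact hSinj hXPy

theorem stmt_5_general {n m : ℕ} (X : Matrix (Fin n) (Fin n) ℂ) (Pi : Fin m → Matrix (Fin n) (Fin n) ℂ)
    (hker : LinearMap.ker (Matrix.toEuclideanLin (∑ k, Pi k)) = ⊥)
    (hXoff : ∀ k l, k ≠ l → Pi k * X * Pi l = 0) :
    LinearMap.ker (Matrix.toEuclideanLin X)
      = ⨆ k, (LinearMap.ker (Matrix.toEuclideanLin X)
          ⊓ LinearMap.range (Matrix.toEuclideanLin (Pi k))) := by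
  refine Module.End.ker_eq_iSup_ker_inf_range _ _ ?_ fun k l hkl ↦ ?_
  · rw [← map_sum]
    exact (LinearMap.isUnit_iff_ker_eq_bot _).mpr hker
  · have h := congrArg (toLpLinAlgEquiv (R := ℂ) (n := Fin n) 2) (hXoff k l hkl)
    rwa [map_mul, map_mul, map_zero] at h

/-- If `(Π_k)` is a finite family of orthogonal projectors with `ker (Σ_k Π_k) = {0}` and
`Π_k X Π_l = 0` for `k ≠ l`, then `ker X = Σ_k (ker X ∩ Π_k H)`. -/
theorem stmt_5 {n m : ℕ} (X : Matrix (Fin n) (Fin n) ℂ) (Pi : Fin m → Matrix (Fin n) (Fin n) ℂ)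
    (hherm : ∀ k, (Pi k)ᴴ = Pi k) (hidem : ∀ k, Pi k * Pi k = Pi k)
    (hker : LinearMap.ker (Matrix.toEuclideanLin (∑ k, Pi k)) = ⊥)
    (hXoff : ∀ k l, k ≠ l → Pi k * X * Pi l = 0) :
    LinearMap.ker (Matrix.toEuclideanLin X)
      = ⨆ k, (LinearMap.ker (Matrix.toEuclideanLin X)
          ⊓ LinearMap.range (Matrix.toEuclideanLin (Pi k))) :=
  stmt_5_general X Pi hker hXoff
end

section
/- Let Λ and Π be orthogonal projectors on a finite-dimensional Hilbert space whose ranges satisfy ΛH ∩ (ΠH)^⊥ = {0} and (ΛH)^⊥ ∩ ΠH = {0}. Then the Moore–Penrose inverse Q of ΛΠ satisfies Q² = Q, Q(H) = Π(H), and ker Q = ker Λ. -/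
/-!
Penrose's equations give `Q = A* Q* Q`, `A* = Q A A*` and their mirror images, so `Q` has the
range and kernel of `A* = ΠΛ`; the same identities give `ΠQ = Q` and `QΛ = Q`, whence
`Q² = QΛΠQ = Q`. Since `ker Π = (ran Π)ᗮ`, the first skewness condition says that `Π` is
injective on `ran Λ`, i.e. `ker ΠΛ = ker Λ`; applied with the roles swapped it gives
`(ran ΠΛ)ᗮ = ker ΛΠ = ker Π = (ran Π)ᗮ`, i.e. `ran ΠΛ = ran Π`.
-/

open Matrix

structure IsMoorePenroseInverse {R : Type*} [Mul R] [Star R] (a q : R) : Prop where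
  mul_inv_mul : a * q * a = a
  inv_mul_inv : q * a * q = q
  isSelfAdjoint_mul_inv : IsSelfAdjoint (a * q)
  isSelfAdjoint_inv_mul : IsSelfAdjoint (q * a)

namespace IsMoorePenroseInverse

theorem map {R S F : Type*} [Mul R] [Star R] [Mul S] [Star S] [FunLike F R S]
    [MulHomClass F R S] [StarHomClass F R S] {a q : R} (h : IsMoorePenroseInverse a q) (f : F) :
    IsMoorePenroseInverse (f a) (f q) where
  mul_inv_mul := by rw [← map_mul, ← map_mul, h.mul_inv_mul]
  inv_mul_inv := by rw [← map_mul, ← map_mul, h.inv_mul_inv]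
  isSelfAdjoint_mul_inv := by rw [← map_mul]; exact h.isSelfAdjoint_mul_inv.map f
  isSelfAdjoint_inv_mul := by rw [← map_mul]; exact h.isSelfAdjoint_inv_mul.map f

section Semigroup

variable {R : Type*} [Semigroup R] [StarMul R] {a q : R}

theorem eq_star_mul_star_mul (h : IsMoorePenroseInverse a q) : q = star a * star q * q := by
  conv_lhs => rw [← h.inv_mul_inv]
  rw [← star_mul, h.isSelfAdjoint_inv_mul.star_eq]

theorem eq_mul_star_mul_star (h : IsMoorePenroseInverse a q) : q = q * star q * star a := by
  conv_lhs => rw [← h.inv_mul_inv]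
  rw [mul_assoc q, mul_assoc q, ← star_mul, h.isSelfAdjoint_mul_inv.star_eq]

theorem star_eq_star_mul_mul (h : IsMoorePenroseInverse a q) : star a = star a * a * q := by
  conv_lhs => rw [← h.mul_inv_mul]
  rw [star_mul, h.isSelfAdjoint_mul_inv.star_eq, mul_assoc]

theorem star_eq_mul_mul_star (h : IsMoorePenroseInverse a q) : star a = q * a * star a := by
  conv_lhs => rw [← h.mul_inv_mul]
  rw [mul_assoc, star_mul, h.isSelfAdjoint_inv_mul.star_eq]

theorem isIdempotentElem_of_isStarProjection {l p : R} (hl : IsStarProjection l)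
    (hp : IsStarProjection p) (h : IsMoorePenroseInverse (l * p) q) : IsIdempotentElem q := by
  have hstar : star (l * p) = p * l := by
    rw [star_mul, hl.isSelfAdjoint.star_eq, hp.isSelfAdjoint.star_eq]
  have hpq : p * q = q := by
    rw [h.eq_star_mul_star_mul, hstar]
    simp only [← mul_assoc, hp.isIdempotentElem.eq]
  have hql : q * l = q := by
    rw [h.eq_mul_star_mul_star, hstar]
    simp only [mul_assoc, hl.isIdempotentElem.eq]
  calc q * q = q * l * (p * q) := by rw [hql, hpq]
    _ = q := by rw [← mul_assoc, mul_assoc q, h.inv_mul_inv]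

end Semigroup

end IsMoorePenroseInverse

namespace ContinuousLinearMap

section Module

variable {R M : Type*} [Semiring R] [TopologicalSpace M] [AddCommMonoid M] [Module R M]

theorem range_mul_le (f g : M →L[R] M) : (f * g).range ≤ f.range :=
  LinearMap.range_comp_le_range _ _

theorem ker_le_ker_mul (f g : M →L[R] M) : g.ker ≤ (f * g).ker :=
  LinearMap.ker_le_ker_comp _ _

end Module

variable {𝕜 E : Type*} [RCLike 𝕜] [NormedAddCommGroup E] [InnerProductSpace 𝕜 E]
  [CompleteSpace E] {p l : E →L[𝕜] E}

theorem ker_mul_eq_of_isSelfAdjoint (hp : IsSelfAdjoint p) (h : l.range ⊓ p.rangeᗮ = ⊥) :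
    (p * l).ker = l.ker := by
  refine le_antisymm (fun x hx => ?_) (ker_le_ker_mul p l)
  have hmem : l x ∈ l.range ⊓ p.rangeᗮ := by
    refine ⟨⟨x, rfl⟩, ?_⟩
    rw [p.orthogonal_range, hp.adjoint_eq]
    exact hx
  rw [h] at hmem
  exact hmem

theorem range_mul_eq_of_isSelfAdjoint [FiniteDimensional 𝕜 E] (hp : IsSelfAdjoint p)
    (hl : IsSelfAdjoint l) (h : l.rangeᗮ ⊓ p.range = ⊥) : (p * l).range = p.range := by
  have horth : (p * l).rangeᗮ = p.rangeᗮ := by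
    rw [orthogonal_range, orthogonal_range, ← star_eq_adjoint, ← star_eq_adjoint, star_mul,
      hp.star_eq, hl.star_eq, ker_mul_eq_of_isSelfAdjoint hl (by rwa [inf_comm])]
  simpa only [Submodule.orthogonal_orthogonal] using congrArg Submodule.orthogonal horth

end ContinuousLinearMap

namespace IsMoorePenroseInverse

open ContinuousLinearMap

variable {𝕜 E : Type*} [RCLike 𝕜] [NormedAddCommGroup E] [InnerProductSpace 𝕜 E]
  [CompleteSpace E] {a q l p : E →L[𝕜] E}

theorem range_eq_range_star (h : IsMoorePenroseInverse a q) : q.range = (star a).range := by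
  refine le_antisymm ?_ ?_
  · rw [h.eq_star_mul_star_mul, mul_assoc]
    exact range_mul_le _ _
  · rw [h.star_eq_mul_mul_star, mul_assoc]
    exact range_mul_le _ _

theorem ker_eq_ker_star (h : IsMoorePenroseInverse a q) : q.ker = (star a).ker := by
  refine le_antisymm ?_ ?_
  · rw [h.star_eq_star_mul_mul]
    exact ker_le_ker_mul _ _
  · rw [h.eq_mul_star_mul_star]
    exact ker_le_ker_mul _ _

theorem range_eq_range_right [FiniteDimensional 𝕜 E] (hl : IsSelfAdjoint l)
    (hp : IsSelfAdjoint p) (h : IsMoorePenroseInverse (l * p) q)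
    (hskew : l.rangeᗮ ⊓ p.range = ⊥) : q.range = p.range := by
  rw [h.range_eq_range_star, star_mul, hl.star_eq, hp.star_eq,
    range_mul_eq_of_isSelfAdjoint hp hl hskew]

theorem ker_eq_ker_left (hl : IsSelfAdjoint l) (hp : IsSelfAdjoint p)
    (h : IsMoorePenroseInverse (l * p) q) (hskew : l.range ⊓ p.rangeᗮ = ⊥) :
    q.ker = l.ker := by
  rw [h.ker_eq_ker_star, star_mul, hl.star_eq, hp.star_eq, ker_mul_eq_of_isSelfAdjoint hp hskew]

end IsMoorePenroseInverse

/-- If `Λ, Π` are orthogonal projectors with skew ranges, then the Moore–Penrose inverse `Q`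
of `ΛΠ` satisfies `Q² = Q`, `ran Q = ran Π`, and `ker Q = ker Λ`. -/
theorem stmt_9 {n : ℕ} (L P Q : Matrix (Fin n) (Fin n) ℂ)
    (hLh : Lᴴ = L) (hLi : L * L = L) (hPh : Pᴴ = P) (hPi : P * P = P)
    (hskew1 : LinearMap.range (Matrix.toEuclideanLin L)
        ⊓ (LinearMap.range (Matrix.toEuclideanLin P))ᗮ = ⊥)
    (hskew2 : (LinearMap.range (Matrix.toEuclideanLin L))ᗮ
        ⊓ LinearMap.range (Matrix.toEuclideanLin P) = ⊥)
    (hmp1 : (L * P) * Q * (L * P) = L * P) (hmp2 : Q * (L * P) * Q = Q)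
    (hmp3 : ((L * P) * Q)ᴴ = (L * P) * Q) (hmp4 : (Q * (L * P))ᴴ = Q * (L * P)) :
    Q * Q = Q
    ∧ LinearMap.range (Matrix.toEuclideanLin Q) = LinearMap.range (Matrix.toEuclideanLin P)
    ∧ LinearMap.ker (Matrix.toEuclideanLin Q) = LinearMap.ker (Matrix.toEuclideanLin L) := by
  have hL : IsStarProjection L := ⟨hLi, hLh⟩
  have hP : IsStarProjection P := ⟨hPi, hPh⟩
  have hQ : IsMoorePenroseInverse (L * P) Q := ⟨hmp1, hmp2, hmp3, hmp4⟩
  -- a star algebra isomorphism whose underlying linear maps are `toEuclideanLin`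
  have hQ' := hQ.map (toEuclideanCLM (n := Fin n) (𝕜 := ℂ))
  rw [map_mul] at hQ'
  exact ⟨hQ.isIdempotentElem_of_isStarProjection hL hP,
    hQ'.range_eq_range_right (hL.map _).isSelfAdjoint (hP.map _).isSelfAdjoint hskew2,
    hQ'.ker_eq_ker_left (hL.map _).isSelfAdjoint (hP.map _).isSelfAdjoint hskew1⟩
end

section
/- Let ℰ = (E₁, E₂, E₍?₎) be an optimal USD measurement for a pair of positive semi-definite operators (γ₁, γ₂). Then supp E₍?₎ ∩ ker γ₁ = supp E₍?₎ ∩ ker γ₂. (Optimality at a vector: if φ ∈ supp E₍?₎ ∩ ker γ₁, replacing (E₂, E₍?₎) by (E₂ + α|φ⟩⟨φ|, E₍?₎ − α|φ⟩⟨φ|) for small α > 0 remains a valid USD measurement, so by optimality ⟨φ|γ₂|φ⟩ = 0.) -/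
/-!
If `φ = E₀ ψ` lies in the support of the inconclusive element and `γ₁ φ = 0`, then by
Cauchy–Schwarz for the form `⟨·, E₀ ·⟩` the rank-one operator `r⁻¹ |φ⟩⟨φ|`, with
`r = ⟨ψ, E₀ ψ⟩ > 0`, lies below `E₀`. Moving it from `E₀` to `E₂` yields another USD measurement,
since `tr (|φ⟩⟨φ| γ₁) = ⟨φ, γ₁ φ⟩ = 0`, whose success probability is larger by
`r⁻¹ ⟨φ, γ₂ φ⟩ ≥ 0`. Optimality forces `⟨φ, γ₂ φ⟩ = 0`, i.e. `γ₂ φ = 0`; the reverse inclusion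
follows by exchanging the roles of the two states.
-/

open Matrix ComplexOrder

namespace Matrix

variable {ι 𝕜 : Type*} [Fintype ι] [RCLike 𝕜]

-- If `⟨ψ, A ψ⟩ = 0` the inverse is the junk value `0` and the claim reduces to `0 ≤ A`.
theorem PosSemidef.sub_smul_vecMulVec_mulVec {A : Matrix ι ι 𝕜} (hA : A.PosSemidef) (ψ : ι → 𝕜) :
    (A - (star ψ ⬝ᵥ (A *ᵥ ψ))⁻¹ • vecMulVec (A *ᵥ ψ) (star (A *ᵥ ψ))).PosSemidef := by
  set φ := A *ᵥ ψ with hφ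
  set r := star ψ ⬝ᵥ φ with hr_def
  have hr : star r = r := IsSelfAdjoint.of_nonneg (hA.dotProduct_mulVec_nonneg ψ)
  rcases eq_or_ne r 0 with hr0 | hr0
  · simpa [hr0] using hA
  refine .of_dotProduct_mulVec_nonneg
    (hA.isHermitian.sub ((posSemidef_vecMulVec_self_star φ).isHermitian.smul ?_)) fun x => ?_
  · rw [IsSelfAdjoint, star_inv₀, hr]
  set t := star φ ⬝ᵥ x with ht_def
  have hψx : star ψ ⬝ᵥ (A *ᵥ x) = t := by
    rw [dotProduct_mulVec, ← hA.isHermitian.eq, ← star_mulVec]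
  have hxψ : star x ⬝ᵥ φ = star t := star_dotProduct x φ
  -- completing the square: the form at `x - (t / r) • ψ` is the form at `x` minus `|t|² / r`
  convert hA.dotProduct_mulVec_nonneg (x - (t / r) • ψ) using 1
  simp only [sub_mulVec, mulVec_sub, mulVec_smul, smul_mulVec, vecMulVec_mulVec, star_sub,
    star_smul, dotProduct_sub, sub_dotProduct, dotProduct_smul, smul_dotProduct, hψx, hxψ,
    star_div₀, hr, ← hφ, ← hr_def, ← ht_def, op_smul_eq_mul, smul_eq_mul]
  field_simp
  ring

theorem trace_vecMulVec_star_mul (φ : ι → 𝕜) (γ : Matrix ι ι 𝕜) :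
    trace (vecMulVec φ (star φ) * γ) = star φ ⬝ᵥ (γ *ᵥ φ) := by
  rw [vecMulVec_mul, trace_vecMulVec, dotProduct_comm, dotProduct_mulVec]

end Matrix

variable {ι : Type*} [Fintype ι]

def successProb (γ₁ γ₂ E₁ E₂ : Matrix ι ι ℂ) : ℝ :=
  (trace (E₁ * γ₁) + trace (E₂ * γ₂)).re

theorem successProb_swap {γ₁ γ₂ E₁ E₂ : Matrix ι ι ℂ} :
    successProb γ₂ γ₁ E₂ E₁ = successProb γ₁ γ₂ E₁ E₂ := by
  rw [successProb, successProb, add_comm]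

theorem successProb_add_right {γ₁ γ₂ E₁ E₂ : Matrix ι ι ℂ} (D : Matrix ι ι ℂ) :
    successProb γ₁ γ₂ E₁ (E₂ + D) = successProb γ₁ γ₂ E₁ E₂ + (trace (D * γ₂)).re := by
  simp only [successProb, add_mul, trace_add, Complex.add_re, add_assoc]

variable [DecidableEq ι]

structure IsUSDMeasurement (γ₁ γ₂ E₁ E₂ E₀ : Matrix ι ι ℂ) : Prop where
  posSemidef₁ : E₁.PosSemidef
  posSemidef₂ : E₂.PosSemidef
  posSemidef₀ : E₀.PosSemidef
  add_add_eq_one : E₁ + E₂ + E₀ = 1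
  trace_mul₂₁ : trace (E₂ * γ₁) = 0
  trace_mul₁₂ : trace (E₁ * γ₂) = 0

structure IsOptimalUSDMeasurement (γ₁ γ₂ E₁ E₂ E₀ : Matrix ι ι ℂ) : Prop
    extends IsUSDMeasurement γ₁ γ₂ E₁ E₂ E₀ where
  successProb_le : ∀ F₁ F₂ F₀, IsUSDMeasurement γ₁ γ₂ F₁ F₂ F₀ →
    successProb γ₁ γ₂ F₁ F₂ ≤ successProb γ₁ γ₂ E₁ E₂

variable {γ₁ γ₂ E₁ E₂ E₀ : Matrix ι ι ℂ}

theorem IsUSDMeasurement.swap (h : IsUSDMeasurement γ₁ γ₂ E₁ E₂ E₀) :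
    IsUSDMeasurement γ₂ γ₁ E₂ E₁ E₀ where
  posSemidef₁ := h.posSemidef₂
  posSemidef₂ := h.posSemidef₁
  posSemidef₀ := h.posSemidef₀
  add_add_eq_one := by rw [add_comm E₂, h.add_add_eq_one]
  trace_mul₂₁ := h.trace_mul₁₂
  trace_mul₁₂ := h.trace_mul₂₁

theorem IsOptimalUSDMeasurement.swap (h : IsOptimalUSDMeasurement γ₁ γ₂ E₁ E₂ E₀) :
    IsOptimalUSDMeasurement γ₂ γ₁ E₂ E₁ E₀ where
  toIsUSDMeasurement := h.toIsUSDMeasurement.swap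
  successProb_le F₂ F₁ F₀ hF := by
    simpa only [successProb_swap] using h.successProb_le F₁ F₂ F₀ hF.swap

theorem IsUSDMeasurement.shift {D : Matrix ι ι ℂ} (h : IsUSDMeasurement γ₁ γ₂ E₁ E₂ E₀)
    (hD : D.PosSemidef) (hD₀ : (E₀ - D).PosSemidef) (hD₁ : trace (D * γ₁) = 0) :
    IsUSDMeasurement γ₁ γ₂ E₁ (E₂ + D) (E₀ - D) where
  posSemidef₁ := h.posSemidef₁
  posSemidef₂ := h.posSemidef₂.add hD
  posSemidef₀ := hD₀
  add_add_eq_one := by rw [← h.add_add_eq_one]; abel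
  trace_mul₂₁ := by rw [add_mul, trace_add, h.trace_mul₂₁, hD₁, add_zero]
  trace_mul₁₂ := h.trace_mul₁₂

theorem IsOptimalUSDMeasurement.re_trace_mul_nonpos {D : Matrix ι ι ℂ}
    (h : IsOptimalUSDMeasurement γ₁ γ₂ E₁ E₂ E₀)
    (hD : D.PosSemidef) (hD₀ : (E₀ - D).PosSemidef) (hD₁ : trace (D * γ₁) = 0) :
    (trace (D * γ₂)).re ≤ 0 := by
  have := h.successProb_le _ _ _ (h.shift hD hD₀ hD₁)
  rw [successProb_add_right] at this
  linarith

theorem IsOptimalUSDMeasurement.mulVec_eq_zero_of_mulVec_eq_zero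
    (h : IsOptimalUSDMeasurement γ₁ γ₂ E₁ E₂ E₀) (hγ₂ : γ₂.PosSemidef) {ψ : ι → ℂ}
    (hψ : γ₁ *ᵥ (E₀ *ᵥ ψ) = 0) : γ₂ *ᵥ (E₀ *ᵥ ψ) = 0 := by
  set φ := E₀ *ᵥ ψ
  set r := star ψ ⬝ᵥ φ
  have hr : 0 ≤ r := h.posSemidef₀.dotProduct_mulVec_nonneg ψ
  rcases hr.eq_or_lt with hr0 | hr_pos
  · have hφ : φ = 0 := (h.posSemidef₀.dotProduct_mulVec_zero_iff ψ).mp hr0.symm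
    rw [hφ, mulVec_zero]
  have hle := h.re_trace_mul_nonpos ((posSemidef_vecMulVec_self_star φ).smul (inv_nonneg.2 hr))
    (h.posSemidef₀.sub_smul_vecMulVec_mulVec ψ)
    (by rw [smul_mul, trace_smul, trace_vecMulVec_star_mul, hψ, dotProduct_zero, smul_zero])
  rw [smul_mul, trace_smul, trace_vecMulVec_star_mul, smul_eq_mul] at hle
  have hgain : 0 ≤ r⁻¹ * star φ ⬝ᵥ (γ₂ *ᵥ φ) :=
    mul_nonneg (inv_nonneg.2 hr) (hγ₂.dotProduct_mulVec_nonneg φ)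
  have hgain_eq : r⁻¹ * star φ ⬝ᵥ (γ₂ *ᵥ φ) = 0 :=
    le_antisymm (Complex.le_def.2 ⟨hle, (Complex.nonneg_iff.1 hgain).2.symm⟩) hgain
  refine (hγ₂.dotProduct_mulVec_zero_iff φ).mp ?_
  exact (mul_eq_zero.1 hgain_eq).resolve_left (inv_ne_zero hr_pos.ne')

theorem IsOptimalUSDMeasurement.range_inf_ker_le (h : IsOptimalUSDMeasurement γ₁ γ₂ E₁ E₂ E₀)
    (hγ₂ : γ₂.PosSemidef) :
    LinearMap.range (toEuclideanLin E₀) ⊓ LinearMap.ker (toEuclideanLin γ₁)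
      ≤ LinearMap.range (toEuclideanLin E₀) ⊓ LinearMap.ker (toEuclideanLin γ₂) := by
  rintro _ ⟨⟨ψ, rfl⟩, hψ⟩
  refine ⟨⟨ψ, rfl⟩, ?_⟩
  rw [SetLike.mem_coe, LinearMap.mem_ker] at hψ ⊢
  exact congrArg (WithLp.toLp 2)
    (h.mulVec_eq_zero_of_mulVec_eq_zero hγ₂ (congrArg WithLp.ofLp hψ))

/-- For an optimal USD measurement `(E₁, E₂, E?)` of `(γ₁, γ₂)`:
`supp E? ∩ ker γ₁ = supp E? ∩ ker γ₂`. -/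
theorem stmt_10 {n : ℕ} (γ₁ γ₂ E₁ E₂ Eq : Matrix (Fin n) (Fin n) ℂ)
    (hγ₁ : γ₁.PosSemidef) (hγ₂ : γ₂.PosSemidef)
    (hE₁ : E₁.PosSemidef) (hE₂ : E₂.PosSemidef) (hEq : Eq.PosSemidef)
    (hsum : E₁ + E₂ + Eq = 1)
    (husd₁ : Matrix.trace (E₂ * γ₁) = 0) (husd₂ : Matrix.trace (E₁ * γ₂) = 0)
    (hopt : ∀ F₁ F₂ Fq : Matrix (Fin n) (Fin n) ℂ,
      F₁.PosSemidef → F₂.PosSemidef → Fq.PosSemidef → F₁ + F₂ + Fq = 1 →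
      Matrix.trace (F₂ * γ₁) = 0 → Matrix.trace (F₁ * γ₂) = 0 →
      (Matrix.trace (F₁ * γ₁) + Matrix.trace (F₂ * γ₂)).re
        ≤ (Matrix.trace (E₁ * γ₁) + Matrix.trace (E₂ * γ₂)).re) :
    LinearMap.range (Matrix.toEuclideanLin Eq) ⊓ LinearMap.ker (Matrix.toEuclideanLin γ₁)
      = LinearMap.range (Matrix.toEuclideanLin Eq) ⊓ LinearMap.ker (Matrix.toEuclideanLin γ₂) := by
  have h : IsOptimalUSDMeasurement γ₁ γ₂ E₁ E₂ Eq :=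
    { posSemidef₁ := hE₁, posSemidef₂ := hE₂, posSemidef₀ := hEq, add_add_eq_one := hsum
      trace_mul₂₁ := husd₁, trace_mul₁₂ := husd₂
      successProb_le := fun F₁ F₂ F₀ hF => hopt F₁ F₂ F₀ hF.posSemidef₁ hF.posSemidef₂
        hF.posSemidef₀ hF.add_add_eq_one hF.trace_mul₂₁ hF.trace_mul₁₂ }
  exact le_antisymm (h.range_inf_ker_le hγ₂) (h.swap.range_inf_ker_le hγ₁)
end

section
/- Let ℰ = (E₁, E₂, E₍?₎) be an optimal and proper USD measurement for (γ₁, γ₂), and let Π be an orthogonal projector with range contained in ker γ₁ ∩ supp(γ₁ + γ₂). Then E₁Π = 0 if and only if E₂Π = Π. -/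
/-!
If `E₁ Π = 0`, then `γ₁ E? Π = 0`: `γ₁ Π = 0` by assumption and `γ₁ E₂ = 0` because
`tr (E₂ γ₁) = 0`. Optimality forces `γ₂ E? Π = 0` as well, since otherwise a rank-one piece
of `E?` along a vector `z = E? p` with `γ₁ z = 0 ≠ γ₂ z` could be moved into `E₂`, keeping the
measurement unambiguous and strictly raising the success probability. So `(γ₁ + γ₂) E? Π = 0`,
and as `Π` ranges inside the support of `γ₁ + γ₂` this gives `Π† E? Π = 0`, hence `E? Π = 0`
and `E₂ Π = Π`. Conversely, `E₂ Π = Π` means `(E₁ + E?) Π = 0`, which for positive `E₁, E?`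
forces `E₁ Π = 0`.
-/

open Matrix ComplexOrder
open scoped MatrixOrder

namespace Matrix

variable {𝕜 n : Type*} [RCLike 𝕜] [Fintype n] [DecidableEq n]

theorem mul_eq_zero_iff_range_le_ker {A B : Matrix n n 𝕜} :
    A * B = 0 ↔
      LinearMap.range (toEuclideanLin B) ≤ LinearMap.ker (toEuclideanLin A) := by
  rw [LinearMap.range_le_ker_iff, ← toLpLin_mul, LinearEquiv.map_eq_zero_iff]

theorem conjTranspose_mul_eq_zero_of_range_le {B C G : Matrix n n 𝕜} (hG : G.IsHermitian)
    (hBG : LinearMap.range (toEuclideanLin B) ≤ LinearMap.range (toEuclideanLin G))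
    (hGC : G * C = 0) : Bᴴ * C = 0 := by
  have hCG : Cᴴ * G = 0 := by rw [← hG.eq, ← conjTranspose_mul, hGC, conjTranspose_zero]
  have hCB : Cᴴ * B = 0 :=
    mul_eq_zero_iff_range_le_ker.mpr (hBG.trans (mul_eq_zero_iff_range_le_ker.mp hCG))
  simpa using congrArg conjTranspose hCB

namespace PosSemidef

variable {A B : Matrix n n 𝕜}

theorem mul_eq_zero_of_conjTranspose_mul_mul_same_eq_zero {m : Type*} (hA : A.PosSemidef)
    {X : Matrix n m 𝕜} (h : Xᴴ * A * X = 0) : A * X = 0 := by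
  obtain ⟨Y, rfl⟩ := CStarAlgebra.nonneg_iff_eq_star_mul_self.mp hA.nonneg
  rw [star_eq_conjTranspose] at h ⊢
  have hYX : Y * X = 0 := conjTranspose_mul_self_eq_zero.mp <| by
    rwa [conjTranspose_mul, Matrix.mul_assoc, ← Matrix.mul_assoc Yᴴ, ← Matrix.mul_assoc]
  rw [Matrix.mul_assoc, hYX, Matrix.mul_zero]

theorem mul_eq_zero_of_trace_mul_eq_zero (hA : A.PosSemidef) (hB : B.PosSemidef)
    (h : (A * B).trace = 0) : A * B = 0 := by
  obtain ⟨Y, rfl⟩ := CStarAlgebra.nonneg_iff_eq_star_mul_self.mp hB.nonneg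
  rw [star_eq_conjTranspose] at h ⊢
  have hYAY : Y * A * Yᴴ = 0 := (hA.mul_mul_conjTranspose_same Y).trace_eq_zero_iff.mp <| by
    rwa [trace_mul_cycle, trace_mul_comm]
  have hAY : A * Yᴴ = 0 :=
    hA.mul_eq_zero_of_conjTranspose_mul_mul_same_eq_zero (by rwa [conjTranspose_conjTranspose])
  rw [← Matrix.mul_assoc, hAY, Matrix.zero_mul]

theorem mul_eq_zero_of_add_mul_eq_zero (hA : A.PosSemidef) (hB : B.PosSemidef)
    {X : Matrix n n 𝕜} (h : (A + B) * X = 0) : A * X = 0 := by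
  have hsum : Xᴴ * A * X + Xᴴ * B * X = 0 := by
    rw [← Matrix.add_mul, ← Matrix.mul_add, Matrix.mul_assoc, h, Matrix.mul_zero]
  exact hA.mul_eq_zero_of_conjTranspose_mul_mul_same_eq_zero
    ((add_eq_zero_iff_of_nonneg (hA.conjTranspose_mul_mul_same X).nonneg
      (hB.conjTranspose_mul_mul_same X).nonneg).mp hsum).1

/-- Writing `A = X† X`, the subtracted matrix is `X† Q X` for the orthogonal projector `Q`
onto `X p`. -/
theorem sub_smul_vecMulVec_mulVec_s11 (hA : A.PosSemidef) (p : n → 𝕜) :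
    (A - (star p ⬝ᵥ A *ᵥ p)⁻¹ • vecMulVec (A *ᵥ p) (star (A *ᵥ p))).PosSemidef := by
  obtain ⟨X, rfl⟩ := CStarAlgebra.nonneg_iff_eq_star_mul_self.mp hA.nonneg
  rw [star_eq_conjTranspose]
  set w := X *ᵥ p
  set c := star w ⬝ᵥ w
  have hc : star p ⬝ᵥ (Xᴴ * X) *ᵥ p = c := by
    rw [← mulVec_mulVec, dotProduct_mulVec, ← star_mulVec]
  have hc_star : star c = c := (IsSelfAdjoint.of_nonneg (dotProduct_star_self_nonneg w)).star_eq
  set Q := c⁻¹ • vecMulVec w (star w)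
  have hQ : IsStarProjection Q := by
    refine ⟨?_, ?_⟩
    · rw [IsIdempotentElem, smul_mul_smul, vecMulVec_mul_vecMulVec, vecMulVec_smul, smul_smul]
      congr 1
      rcases eq_or_ne c 0 with hc0 | hc0
      · simp [hc0]
      · rw [mul_assoc, inv_mul_cancel₀ hc0, mul_one]
    · rw [IsSelfAdjoint, star_smul, star_eq_conjTranspose, conjTranspose_vecMulVec, star_star,
        star_inv₀, hc_star]
  have hQX : Xᴴ * X - c⁻¹ • vecMulVec ((Xᴴ * X) *ᵥ p) (star ((Xᴴ * X) *ᵥ p)) =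
      Xᴴ * (1 - Q) * X := by
    simp only [Q, w, Matrix.mul_sub, Matrix.sub_mul, Matrix.mul_one, Matrix.mul_smul,
      Matrix.smul_mul, mul_vecMulVec, vecMulVec_mul, ← mulVec_mulVec, star_mulVec, vecMul_vecMul,
      conjTranspose_conjTranspose]
  rw [hc, hQX]
  exact hQ.one_sub_nonneg.posSemidef.conjTranspose_mul_mul_same X

end PosSemidef

end Matrix

section UnambiguousDiscrimination

variable {n : Type*} [Fintype n] [DecidableEq n]

theorem mulVec_eq_zero_of_optimal {γ₁ γ₂ E₁ E₂ E₀ : Matrix n n ℂ}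
    (hγ₂ : γ₂.PosSemidef) (hE₁ : E₁.PosSemidef) (hE₂ : E₂.PosSemidef) (hE₀ : E₀.PosSemidef)
    (hsum : E₁ + E₂ + E₀ = 1)
    (husd₁ : trace (E₂ * γ₁) = 0) (husd₂ : trace (E₁ * γ₂) = 0)
    (hopt : ∀ F₁ F₂ F₀ : Matrix n n ℂ,
      F₁.PosSemidef → F₂.PosSemidef → F₀.PosSemidef → F₁ + F₂ + F₀ = 1 →
      trace (F₂ * γ₁) = 0 → trace (F₁ * γ₂) = 0 →
      (trace (F₁ * γ₁) + trace (F₂ * γ₂)).re ≤ (trace (E₁ * γ₁) + trace (E₂ * γ₂)).re)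
    (p : n → ℂ) (h₁ : γ₁ *ᵥ (E₀ *ᵥ p) = 0) : γ₂ *ᵥ (E₀ *ᵥ p) = 0 := by
  by_contra h₂
  set z := E₀ *ᵥ p
  set ε := star p ⬝ᵥ z
  set S := ε⁻¹ • vecMulVec z (star z)
  have hε : 0 < ε := lt_of_le_of_ne (hE₀.dotProduct_mulVec_nonneg p) fun h ↦
    h₂ (by rw [show z = 0 from (hE₀.dotProduct_mulVec_zero_iff p).mp h.symm, mulVec_zero])
  have hS : S.PosSemidef := (posSemidef_vecMulVec_self_star z).smul (inv_nonneg.mpr hε.le)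
  have htrace (M : Matrix n n ℂ) : trace (S * M) = ε⁻¹ * (star z ⬝ᵥ M *ᵥ z) := by
    rw [Matrix.smul_mul, trace_smul, vecMulVec_mul, trace_vecMulVec, dotProduct_comm,
      ← dotProduct_mulVec, smul_eq_mul]
  have hgain : 0 < (trace (S * γ₂)).re := by
    have hδ : 0 < star z ⬝ᵥ γ₂ *ᵥ z := lt_of_le_of_ne (hγ₂.dotProduct_mulVec_nonneg z)
      (Ne.symm ((hγ₂.dotProduct_mulVec_zero_iff z).not.mpr h₂))
    rw [htrace]
    exact (Complex.pos_iff.mp (mul_pos (inv_pos.mpr hε) hδ)).1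
  have hle := hopt E₁ (E₂ + S) (E₀ - S) hE₁ (hE₂.add hS) (hE₀.sub_smul_vecMulVec_mulVec_s11 p)
    (by rw [← hsum]; abel)
    (by rw [Matrix.add_mul, trace_add, husd₁, htrace, h₁, dotProduct_zero, mul_zero, add_zero])
    husd₂
  rw [Matrix.add_mul, trace_add, Complex.add_re, Complex.add_re, Complex.add_re] at hle
  linarith

end UnambiguousDiscrimination

theorem stmt_11_general {n : ℕ} (γ₁ γ₂ E₁ E₂ Eq P : Matrix (Fin n) (Fin n) ℂ)
    (hγ₁ : γ₁.PosSemidef) (hγ₂ : γ₂.PosSemidef)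
    (hE₁ : E₁.PosSemidef) (hE₂ : E₂.PosSemidef) (hEq : Eq.PosSemidef)
    (hsum : E₁ + E₂ + Eq = 1)
    (husd₁ : Matrix.trace (E₂ * γ₁) = 0) (husd₂ : Matrix.trace (E₁ * γ₂) = 0)
    (hopt : ∀ F₁ F₂ Fq : Matrix (Fin n) (Fin n) ℂ,
      F₁.PosSemidef → F₂.PosSemidef → Fq.PosSemidef → F₁ + F₂ + Fq = 1 →
      Matrix.trace (F₂ * γ₁) = 0 → Matrix.trace (F₁ * γ₂) = 0 →
      (Matrix.trace (F₁ * γ₁) + Matrix.trace (F₂ * γ₂)).re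
        ≤ (Matrix.trace (E₁ * γ₁) + Matrix.trace (E₂ * γ₂)).re)
    (hPr : LinearMap.range (Matrix.toEuclideanLin P)
        ≤ LinearMap.ker (Matrix.toEuclideanLin γ₁)
          ⊓ LinearMap.range (Matrix.toEuclideanLin (γ₁ + γ₂))) :
    E₁ * P = 0 ↔ E₂ * P = P := by
  constructor
  · intro hE₁P
    have hγ₁P : γ₁ * P = 0 := mul_eq_zero_iff_range_le_ker.mpr (hPr.trans inf_le_left)
    have hγ₁E₂ : γ₁ * E₂ = 0 :=
      hγ₁.mul_eq_zero_of_trace_mul_eq_zero hE₂ (by rwa [trace_mul_comm])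
    have hγ₁EqP : γ₁ * (Eq * P) = 0 := by
      calc γ₁ * (Eq * P) = γ₁ * P - γ₁ * (E₁ * P) - γ₁ * E₂ * P := by
            rw [eq_sub_of_add_eq' hsum]; noncomm_ring
        _ = 0 := by rw [hγ₁P, hE₁P, hγ₁E₂]; simp
    have hγ₂EqP : γ₂ * (Eq * P) = 0 := ext_iff_mulVec.mpr fun v ↦ by
      simpa [mulVec_mulVec] using mulVec_eq_zero_of_optimal hγ₂ hE₁ hE₂ hEq hsum husd₁ husd₂ hopt
        (P *ᵥ v) (by simpa [mulVec_mulVec] using congrArg (· *ᵥ v) hγ₁EqP)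
    have hPEqP : Pᴴ * (Eq * P) = 0 :=
      conjTranspose_mul_eq_zero_of_range_le (hγ₁.1.add hγ₂.1) (hPr.trans inf_le_right)
        (by rw [Matrix.add_mul, hγ₁EqP, hγ₂EqP, add_zero])
    have hEqP : Eq * P = 0 :=
      hEq.mul_eq_zero_of_conjTranspose_mul_mul_same_eq_zero (by rwa [Matrix.mul_assoc])
    calc E₂ * P = (E₁ + E₂ + Eq) * P - E₁ * P - Eq * P := by noncomm_ring
      _ = P := by rw [hsum, hE₁P, hEqP]; simp
  · intro hE₂P
    refine hE₁.mul_eq_zero_of_add_mul_eq_zero hEq ?_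
    calc (E₁ + Eq) * P = (E₁ + E₂ + Eq) * P - E₂ * P := by noncomm_ring
      _ = 0 := by rw [hsum, hE₂P, Matrix.one_mul, sub_self]

/-- For an optimal and proper USD measurement `(E₁, E₂, E?)` of `(γ₁, γ₂)` and an orthogonal
projector `Π` with range inside `ker γ₁ ∩ supp (γ₁+γ₂)`: `E₁ Π = 0 ↔ E₂ Π = Π`. -/
theorem stmt_11 {n : ℕ} (γ₁ γ₂ E₁ E₂ Eq P : Matrix (Fin n) (Fin n) ℂ)
    (hγ₁ : γ₁.PosSemidef) (hγ₂ : γ₂.PosSemidef)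
    (hE₁ : E₁.PosSemidef) (hE₂ : E₂.PosSemidef) (hEq : Eq.PosSemidef)
    (hsum : E₁ + E₂ + Eq = 1)
    (husd₁ : Matrix.trace (E₂ * γ₁) = 0) (husd₂ : Matrix.trace (E₁ * γ₂) = 0)
    (hproper : LinearMap.range (Matrix.toEuclideanLin (E₁ + E₂))
        ≤ LinearMap.range (Matrix.toEuclideanLin (γ₁ + γ₂)))
    (hopt : ∀ F₁ F₂ Fq : Matrix (Fin n) (Fin n) ℂ,
      F₁.PosSemidef → F₂.PosSemidef → Fq.PosSemidef → F₁ + F₂ + Fq = 1 →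
      Matrix.trace (F₂ * γ₁) = 0 → Matrix.trace (F₁ * γ₂) = 0 →
      (Matrix.trace (F₁ * γ₁) + Matrix.trace (F₂ * γ₂)).re
        ≤ (Matrix.trace (E₁ * γ₁) + Matrix.trace (E₂ * γ₂)).re)
    (hPh : Pᴴ = P) (hPi : P * P = P)
    (hPr : LinearMap.range (Matrix.toEuclideanLin P)
        ≤ LinearMap.ker (Matrix.toEuclideanLin γ₁)
          ⊓ LinearMap.range (Matrix.toEuclideanLin (γ₁ + γ₂))) :
    E₁ * P = 0 ↔ E₂ * P = P :=
  stmt_11_general γ₁ γ₂ E₁ E₂ Eq P hγ₁ hγ₂ hE₁ hE₂ hEq hsum husd₁ husd₂ hopt hPr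
end

section
/- Let E₍?₎ satisfy 0 ≤ E₍?₎ ≤ 𝟙 and write Π₍?₎ for the orthogonal projector onto supp E₍?₎. If E₍?₎(γ₂ − γ₁)E₍?₎ = E₍?₎(γ₂ − γ₁)E₍?₎², then E₍?₎(γ₂ − γ₁)E₍?₎ = Π₍?₎(γ₂ − γ₁)Π₍?₎. -/
open Matrix ComplexOrder

/-!
Write `B = E A E` with `A = γ₂ - γ₁`. Taking adjoints in `B = B E` gives `B = E B`, so `B`
is left and right invariant under `E`. Since `E` is self-adjoint it vanishes on
`(range E)ᗮ = ker E`, so for `Π x = E a` one has `E x = E² a`, whence `B x = B a`; and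
`Π (A E a) = E A E a` because `A E a - E A E a` lies in `ker E`.
-/

namespace LinearMap.IsSymmetric

variable {𝕜 V : Type*} [RCLike 𝕜] [NormedAddCommGroup V] [InnerProductSpace 𝕜 V]
  {T S : V →ₗ[𝕜] V}

theorem apply_starProjection_range (hT : T.IsSymmetric)
    [(range T).HasOrthogonalProjection] (x : V) : T ((range T).starProjection x) = T x := by
  have hx : x - (range T).starProjection x ∈ ker T :=
    hT.orthogonal_range ▸ (range T).sub_starProjection_mem_orthogonal x
  rwa [mem_ker, map_sub, sub_eq_zero, eq_comm] at hx

theorem starProjection_range_eq_apply (hT : T.IsSymmetric)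
    [(range T).HasOrthogonalProjection] {z : V} (hz : T (T z) = T z) :
    (range T).starProjection z = T z := by
  refine Submodule.eq_starProjection_of_mem_orthogonal (mem_range_self T z) ?_
  rw [hT.orthogonal_range, mem_ker, map_sub, hz, sub_self]

theorem self_comp_conj_eq_of_conj_comp_self_eq (hT : T.IsSymmetric) (hS : S.IsSymmetric)
    (h : T ∘ₗ S ∘ₗ T ∘ₗ T = T ∘ₗ S ∘ₗ T) : T ∘ₗ T ∘ₗ S ∘ₗ T = T ∘ₗ S ∘ₗ T := by
  ext x
  refine ext_inner_right 𝕜 fun y => ?_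
  have hy := congr($h y)
  simp only [comp_apply] at hy ⊢
  rw [hT, hT, hS, hT, hy, ← hT x, ← hS, ← hT]

theorem conj_eq_starProjection_conj (hT : T.IsSymmetric) (hS : S.IsSymmetric)
    [(range T).HasOrthogonalProjection] (h : T ∘ₗ S ∘ₗ T ∘ₗ T = T ∘ₗ S ∘ₗ T) :
    T ∘ₗ S ∘ₗ T = ((range T).starProjection : V →ₗ[𝕜] V) ∘ₗ S ∘ₗ (range T).starProjection := by
  have hleft := hT.self_comp_conj_eq_of_conj_comp_self_eq hS h
  ext x
  obtain ⟨a, ha⟩ := (range T).starProjection_apply_mem x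
  have hTx : T x = T (T a) := by rw [ha, hT.apply_starProjection_range]
  simp only [comp_apply, ContinuousLinearMap.coe_coe, ← ha]
  have hz : T (T (S (T a))) = T (S (T a)) := congr($hleft a)
  rw [hT.starProjection_range_eq_apply hz, hTx]
  exact congr($h a)

end LinearMap.IsSymmetric

theorem stmt_12_general {n : ℕ} (γ₁ γ₂ Eq : Matrix (Fin n) (Fin n) ℂ)
    (hγ₁ : γ₁ᴴ = γ₁) (hγ₂ : γ₂ᴴ = γ₂)
    (hEq : Eq.PosSemidef)
    (h : Eq * (γ₂ - γ₁) * Eq = Eq * (γ₂ - γ₁) * Eq * Eq) :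
    Matrix.toEuclideanLin (Eq * (γ₂ - γ₁) * Eq)
      = ((LinearMap.range (Matrix.toEuclideanLin Eq)).subtypeL.comp
            (Submodule.orthogonalProjectionOnto (LinearMap.range (Matrix.toEuclideanLin Eq)))).toLinearMap
        ∘ₗ Matrix.toEuclideanLin (γ₂ - γ₁)
        ∘ₗ ((LinearMap.range (Matrix.toEuclideanLin Eq)).subtypeL.comp
            (Submodule.orthogonalProjectionOnto (LinearMap.range (Matrix.toEuclideanLin Eq)))).toLinearMap := by
  have hE := isSymmetric_toEuclideanLin_iff.mpr hEq.isHermitian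
  have hA := isSymmetric_toEuclideanLin_iff.mpr (IsHermitian.sub hγ₂ hγ₁)
  have hlin := congr(toEuclideanLin $h.symm)
  simp only [toLpLin_mul_same, LinearMap.comp_assoc] at hlin ⊢
  exact hE.conj_eq_starProjection_conj hA hlin

/-- If `0 ≤ E? ≤ 𝟙` and `E?(γ₂−γ₁)E? = E?(γ₂−γ₁)E?²`, then
`E?(γ₂−γ₁)E? = Π?(γ₂−γ₁)Π?` with `Π?` the orthogonal projector onto `supp E?`. -/
theorem stmt_12 {n : ℕ} (γ₁ γ₂ Eq : Matrix (Fin n) (Fin n) ℂ)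
    (hγ₁ : γ₁ᴴ = γ₁) (hγ₂ : γ₂ᴴ = γ₂)
    (hEq : Eq.PosSemidef) (hEq' : (1 - Eq).PosSemidef)
    (h : Eq * (γ₂ - γ₁) * Eq = Eq * (γ₂ - γ₁) * Eq * Eq) :
    Matrix.toEuclideanLin (Eq * (γ₂ - γ₁) * Eq)
      = ((LinearMap.range (Matrix.toEuclideanLin Eq)).subtypeL.comp
            (Submodule.orthogonalProjectionOnto (LinearMap.range (Matrix.toEuclideanLin Eq)))).toLinearMap
        ∘ₗ Matrix.toEuclideanLin (γ₂ - γ₁)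
        ∘ₗ ((LinearMap.range (Matrix.toEuclideanLin Eq)).subtypeL.comp
            (Submodule.orthogonalProjectionOnto (LinearMap.range (Matrix.toEuclideanLin Eq)))).toLinearMap :=
  stmt_12_general γ₁ γ₂ Eq hγ₁ hγ₂ hEq h
end

section
/- Let E₍?₎ satisfy 0 ≤ E₍?₎ ≤ 𝟙 and let Δ be the orthogonal projector onto ker(𝟙 − E₍?₎). If E₍?₎(γ₂ − γ₁)E₍?₎(𝟙 − E₍?₎) = 0, then E₍?₎(γ₂ − γ₁)E₍?₎ = Δ(γ₂ − γ₁)Δ. -/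
/-!
Write `A = E(γ₂ − γ₁)E` and `N = E − Δ`. Since `EΔ = ΔE = Δ`, one has `E(1 − E) = N(1 − N)`,
and `1 − N = (1 − E) + Δ` is positive definite, as `ker (1 − E) = range Δ` meets `ker Δ` only in
`0`. The hypothesis says `A = AE`, so `0 = AE(1 − E) = AN(1 − N)`, whence `AN = 0` and `A = AΔ`.
Taking adjoints gives `A = ΔA`, so `A = ΔAΔ = Δ(γ₂ − γ₁)Δ`.
-/

open Matrix ComplexOrder

section Ring

variable {R : Type*} [Ring R] {a e d : R}

theorem sub_mul_one_sub_add_eq (hed : e * d = d) (hde : d * e = d) (hd : IsIdempotentElem d) :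
    (e - d) * (1 - e + d) = e * (1 - e) := by
  have expand : (e - d) * (1 - e + d) = e * (1 - e) + e * d - d + d * e - d * d := by noncomm_ring
  rw [expand, hed, hde, hd.eq]
  abel

theorem mul_eq_self_of_mul_one_sub_eq_zero (hed : e * d = d) (hde : d * e = d)
    (hd : IsIdempotentElem d) (hu : IsUnit (1 - e + d)) (ha : a * (1 - e) = 0) : a * d = a := by
  have hae : a * e = a := by rwa [mul_sub, mul_one, sub_eq_zero, eq_comm] at ha
  have had : a * (e - d) = 0 := by
    rw [← hu.mul_left_eq_zero, mul_assoc, sub_mul_one_sub_add_eq hed hde hd, ← mul_assoc, hae, ha]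
  rwa [mul_sub, hae, sub_eq_zero, eq_comm] at had

variable [StarRing R]

theorem mul_mul_eq_of_mul_one_sub_eq_zero {m : R}
    (he : IsSelfAdjoint e) (hd : IsSelfAdjoint d) (hm : IsSelfAdjoint m)
    (hd_idem : IsIdempotentElem d) (hed : e * d = d) (hu : IsUnit (1 - e + d))
    (h : e * m * e * (1 - e) = 0) : e * m * e = d * m * d := by
  have hde : d * e = d := by simpa [he.star_eq, hd.star_eq] using congrArg star hed
  have hright : e * m * e * d = e * m * e := mul_eq_self_of_mul_one_sub_eq_zero hed hde hd_idem hu h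
  have hleft : d * (e * m * e) = e * m * e := by
    simpa [he.star_eq, hd.star_eq, hm.star_eq, mul_assoc] using congrArg star hright
  calc e * m * e = d * (e * m * e) * d := by rw [hleft, hright]
    _ = (d * e) * m * (e * d) := by noncomm_ring
    _ = d * m * d := by rw [hde, hed]

end Ring

namespace Matrix

variable {𝕜 n : Type*} [RCLike 𝕜] [Fintype n]

theorem PosSemidef.posDef_add {A B : Matrix n n 𝕜} (hA : A.PosSemidef) (hB : B.PosSemidef)
    (h : ∀ x, A *ᵥ x = 0 → B *ᵥ x = 0 → x = 0) : (A + B).PosDef := by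
  refine posDef_iff_dotProduct_mulVec.mpr ⟨hA.1.add hB.1, fun x hx => ?_⟩
  have hAx := hA.dotProduct_mulVec_nonneg x
  have hBx := hB.dotProduct_mulVec_nonneg x
  rw [add_mulVec, dotProduct_add]
  refine (add_nonneg hAx hBx).lt_of_ne fun hsum => hx ?_
  obtain ⟨hA0, hB0⟩ := (add_eq_zero_iff_of_nonneg hAx hBx).mp hsum.symm
  exact h x ((hA.dotProduct_mulVec_zero_iff x).mp hA0) ((hB.dotProduct_mulVec_zero_iff x).mp hB0)

variable [DecidableEq n]

theorem range_toEuclideanLin_le_ker_iff {A B : Matrix n n 𝕜} :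
    LinearMap.range (toEuclideanLin B) ≤ LinearMap.ker (toEuclideanLin A) ↔ A * B = 0 := by
  rw [LinearMap.range_le_ker_iff, ← toLpLin_mul_same, LinearEquiv.map_eq_zero_iff]

theorem mulVec_eq_self_of_mem_range {D : Matrix n n 𝕜} (hD : IsIdempotentElem D) {x : n → 𝕜}
    (hx : WithLp.toLp 2 x ∈ LinearMap.range (toEuclideanLin D)) : D *ᵥ x = x := by
  have hD' : IsIdempotentElem (toEuclideanLin D) := hD.map (toLpLinAlgEquiv 2)
  simpa using (LinearMap.IsIdempotentElem.mem_range_iff hD').mp hx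

end Matrix

/-- If `0 ≤ E? ≤ 𝟙` and `E?(γ₂−γ₁)E?(𝟙−E?) = 0`, then
`E?(γ₂−γ₁)E? = Δ(γ₂−γ₁)Δ`, where `Δ` is the orthogonal projector onto `ker (𝟙−E?)`
(characterized as the self-adjoint idempotent with range `ker (𝟙−E?)`). -/
theorem stmt_13 {n : ℕ} (γ₁ γ₂ Eq D : Matrix (Fin n) (Fin n) ℂ)
    (hγ₁ : γ₁ᴴ = γ₁) (hγ₂ : γ₂ᴴ = γ₂)
    (hEq : Eq.PosSemidef) (hEq' : (1 - Eq).PosSemidef)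
    (hDh : Dᴴ = D) (hDi : D * D = D)
    (hDr : LinearMap.range (Matrix.toEuclideanLin D)
        = LinearMap.ker (Matrix.toEuclideanLin (1 - Eq)))
    (h : Eq * (γ₂ - γ₁) * Eq * (1 - Eq) = 0) :
    Eq * (γ₂ - γ₁) * Eq = D * (γ₂ - γ₁) * D := by
  have hED : Eq * D = D := by
    have hker : (1 - Eq) * D = 0 := range_toEuclideanLin_le_ker_iff.mp hDr.le
    rwa [one_sub_mul, sub_eq_zero, eq_comm] at hker
  have hDpsd : D.PosSemidef := by
    simpa only [hDh, hDi] using posSemidef_conjTranspose_mul_self D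
  have hker : ∀ x, (1 - Eq) *ᵥ x = 0 → D *ᵥ x = 0 → x = 0 := fun x hEx hDx => by
    have hx : WithLp.toLp 2 x ∈ LinearMap.range (toEuclideanLin D) := by
      rw [hDr, LinearMap.mem_ker, toLpLin_toLp, toLin'_apply, hEx]; rfl
    rw [← mulVec_eq_self_of_mem_range hDi hx, hDx]
  exact mul_mul_eq_of_mul_one_sub_eq_zero hEq.1 hDh (IsHermitian.sub hγ₂ hγ₁) hDi hED
    (hEq'.posDef_add hDpsd hker).isUnit h
end

section
/- Let γ₁, γ₂ be positive semi-definite operators with supp γ₁ ∩ supp γ₂ = {0}, and let (γ₁+γ₂)⁻ denote the inverse of γ₁+γ₂ on its support (Moore–Penrose inverse). Then γ₁(γ₁+γ₂)⁻γ₁ = γ₁ and γ₂(γ₁+γ₂)⁻γ₁ = 0. -/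
/-!
Since `ker (γ₁ + γ₂) = ker γ₁ ∩ ker γ₂` for positive semi-definite `γ₁, γ₂`, any `X` with
`X (γ₁ + γ₂) = 0` also kills `γ₁`; applied to `X = (γ₁ + γ₂) g - 1` this gives
`(γ₁ + γ₂) g γ₁ = γ₁`. Hence `γ₂ g γ₁ = γ₁ (1 - g γ₁)` lies in `supp γ₁ ∩ supp γ₂ = 0`, and then
`γ₁ g γ₁ = γ₁`.
-/

open Matrix ComplexOrder

namespace Matrix

open scoped ENNReal

variable {m n k l R 𝕜 : Type*}

theorem mul_eq_zero_of_disjoint_range [Fintype n] [DecidableEq n] [Fintype l] [DecidableEq l]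
    [Fintype k] [DecidableEq k] [CommRing R] {p q : ℝ≥0∞}
    {A : Matrix m n R} {B : Matrix m l R} {X : Matrix n k R} {Y : Matrix l k R}
    (h : Disjoint (LinearMap.range (toLpLin p q A)) (LinearMap.range (toLpLin p q B)))
    (hXY : A * X = B * Y) : A * X = 0 := by
  have hA : LinearMap.range (toLpLin p q (A * X)) ≤ LinearMap.range (toLpLin p q A) := by
    rw [toLpLin_mul p p q]
    exact LinearMap.range_comp_le_range _ _
  have hB : LinearMap.range (toLpLin p q (A * X)) ≤ LinearMap.range (toLpLin p q B) := by
    rw [hXY, toLpLin_mul p p q]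
    exact LinearMap.range_comp_le_range _ _
  exact (toLpLin p q).map_eq_zero_iff.mp (LinearMap.range_eq_bot.mp (le_bot_iff.mp (h hA hB)))

namespace PosSemidef

variable [Fintype n] [RCLike 𝕜] {A B : Matrix n n 𝕜}

theorem mulVec_eq_zero_of_add_mulVec_eq_zero (hA : A.PosSemidef) (hB : B.PosSemidef)
    {x : n → 𝕜} (h : (A + B) *ᵥ x = 0) : A *ᵥ x = 0 := by
  have hsum : star x ⬝ᵥ A *ᵥ x + star x ⬝ᵥ B *ᵥ x = 0 := by
    rw [← dotProduct_add, ← add_mulVec, h, dotProduct_zero]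
  exact (hA.dotProduct_mulVec_zero_iff x).mp
    ((add_eq_zero_iff_of_nonneg (hA.dotProduct_mulVec_nonneg x)
      (hB.dotProduct_mulVec_nonneg x)).mp hsum).1

theorem mul_eq_zero_of_mul_add_eq_zero [Fintype m] (hA : A.PosSemidef) (hB : B.PosSemidef)
    {X : Matrix m n 𝕜} (h : X * (A + B) = 0) : X * A = 0 := by
  have h' : (A + B) * Xᴴ = 0 := by
    rw [← (hA.1.add hB.1).eq, ← conjTranspose_mul, h, conjTranspose_zero]
  have hAX : A * Xᴴ = 0 := ext_iff_mulVec.mpr fun v => by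
    rw [← mulVec_mulVec, zero_mulVec]
    exact hA.mulVec_eq_zero_of_add_mulVec_eq_zero hB (by rw [mulVec_mulVec, h', zero_mulVec])
  rw [← conjTranspose_eq_zero, conjTranspose_mul, hA.1.eq, hAX]

end PosSemidef

end Matrix

theorem stmt_15_general {n : ℕ} (γ₁ γ₂ g : Matrix (Fin n) (Fin n) ℂ)
    (hγ₁ : γ₁.PosSemidef) (hγ₂ : γ₂.PosSemidef)
    (hdisj : LinearMap.range (Matrix.toEuclideanLin γ₁)
        ⊓ LinearMap.range (Matrix.toEuclideanLin γ₂) = ⊥)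
    (hmp1 : (γ₁ + γ₂) * g * (γ₁ + γ₂) = γ₁ + γ₂) :
    γ₁ * g * γ₁ = γ₁ ∧ γ₂ * g * γ₁ = 0 := by
  have hproj : (γ₁ + γ₂) * g * γ₁ = γ₁ := by
    have h : ((γ₁ + γ₂) * g - 1) * (γ₁ + γ₂) = 0 := by rw [sub_mul, hmp1, one_mul, sub_self]
    simpa [sub_mul, sub_eq_zero] using hγ₁.mul_eq_zero_of_mul_add_eq_zero hγ₂ h
  have h21 : γ₂ * g * γ₁ = 0 := by
    rw [mul_assoc]
    refine mul_eq_zero_of_disjoint_range (disjoint_iff.mpr (by rwa [inf_comm]))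
      (Y := 1 - g * γ₁) ?_
    rw [mul_sub, mul_one]
    nth_rewrite 2 [← hproj]
    noncomm_ring
  rw [add_mul, add_mul, h21, add_zero] at hproj
  exact ⟨hproj, h21⟩

/-- For positive semi-definite `γ₁, γ₂` with `supp γ₁ ∩ supp γ₂ = {0}`, the Moore–Penrose
inverse `g` of `γ₁+γ₂` satisfies `γ₁ g γ₁ = γ₁` and `γ₂ g γ₁ = 0`. -/
theorem stmt_15 {n : ℕ} (γ₁ γ₂ g : Matrix (Fin n) (Fin n) ℂ)
    (hγ₁ : γ₁.PosSemidef) (hγ₂ : γ₂.PosSemidef)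
    (hdisj : LinearMap.range (Matrix.toEuclideanLin γ₁)
        ⊓ LinearMap.range (Matrix.toEuclideanLin γ₂) = ⊥)
    (hmp1 : (γ₁ + γ₂) * g * (γ₁ + γ₂) = γ₁ + γ₂) (hmp2 : g * (γ₁ + γ₂) * g = g)
    (hmp3 : ((γ₁ + γ₂) * g)ᴴ = (γ₁ + γ₂) * g) (hmp4 : (g * (γ₁ + γ₂))ᴴ = g * (γ₁ + γ₂)) :
    γ₁ * g * γ₁ = γ₁ ∧ γ₂ * g * γ₁ = 0 :=
  stmt_15_general γ₁ γ₂ g hγ₁ hγ₂ hdisj hmp1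
end

section
/- Let γ₁, γ₂ be positive semi-definite operators with supp γ₁ ∩ supp γ₂ = {0}, and let U be a unitary from the polar decomposition √γ₁√γ₂ U = F₁ where F₁ = √(√γ₁ γ₂ √γ₁). Define E₍?₎ = 𝟙 − (γ₁+γ₂)⁻{√γ₁(γ₁ − F₁)√γ₁ + √γ₂(γ₂ − F₂)√γ₂}(γ₁+γ₂)⁻ (restricted to supp(γ₁+γ₂), acting as identity on the kernel), where F₂ = √(√γ₂ γ₁ √γ₂). Then E₍?₎√γ₁ = E₍?₎√γ₂ U, and consequently E₍?₎ γ₁ E₍?₎ = E₍?₎ γ₂ E₍?₎. -/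
/-!
Write `sᵢ = √γᵢ` and `A = s₁(γ₁ - F₁)s₁ + s₂(γ₂ - F₂)s₂`, so that `E = 1 - gAg`.
Since `supp γ₁ ∩ supp γ₂ = 0`, the Moore–Penrose inverse `g` satisfies `γᵢ g sⱼ = δᵢⱼ sⱼ`.
Self-adjointness of `F₁ = s₁s₂U` and `F₂ = Us₁s₂` lets one rewrite
`A = (γ₁ - s₁U*s₂)γ₁ + (γ₂ - s₂Us₁)γ₂`, whence `Ag(s₁ - s₂U) = (γ₁ + γ₂)(s₁ - s₂U)`; as
`g(γ₁ + γ₂)` fixes `s₁` and `s₂`, this gives `E(s₁ - s₂U) = 0`. As `E` is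
self-adjoint, `s₁E = U*s₂E`, so `Eγ₁E = (Es₂U)(U*s₂E) = Eγ₂E`.
-/

open Matrix ComplexOrder

noncomputable def Matrix.PosSemidef.sqrt {n 𝕜 : Type*} [Fintype n] [DecidableEq n] [RCLike 𝕜]
    {A : Matrix n n 𝕜} (hA : A.PosSemidef) : Matrix n n 𝕜 :=
  hA.1.eigenvectorUnitary.1 * diagonal ((↑) ∘ (√·) ∘ hA.1.eigenvalues) *
    (star hA.1.eigenvectorUnitary : Matrix n n 𝕜)

structure IsMoorePenroseInverse_s16 {R : Type*} [Mul R] [Star R] (a g : R) : Prop where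
  mul_inv_mul : a * g * a = a
  inv_mul_inv : g * a * g = g
  isSelfAdjoint_mul_inv : IsSelfAdjoint (a * g)
  isSelfAdjoint_inv_mul : IsSelfAdjoint (g * a)

namespace IsMoorePenroseInverse_s16

variable {R : Type*} [Semigroup R] [StarMul R] {a g : R}

theorem star_inv_mul (h : IsMoorePenroseInverse_s16 a g) (ha : IsSelfAdjoint a) :
    star g * a = a * g := by
  simpa only [star_mul, ha.star_eq] using h.isSelfAdjoint_mul_inv.star_eq

theorem mul_star_inv (h : IsMoorePenroseInverse_s16 a g) (ha : IsSelfAdjoint a) :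
    a * star g = g * a := by
  simpa only [star_mul, ha.star_eq] using h.isSelfAdjoint_inv_mul.star_eq

theorem commute (h : IsMoorePenroseInverse_s16 a g) (ha : IsSelfAdjoint a) : Commute a g := by
  have h₁ : a * g = a * g * (g * a) := by
    calc a * g = star g * (a * g * a) := by rw [h.mul_inv_mul, h.star_inv_mul ha]
      _ = a * g * (g * a) := by rw [← mul_assoc, ← mul_assoc, h.star_inv_mul ha, mul_assoc]
  have h₂ : g * a = a * g * (g * a) := by
    calc g * a = a * g * a * star g := by rw [h.mul_inv_mul, h.mul_star_inv ha]
      _ = a * g * (g * a) := by rw [mul_assoc, h.mul_star_inv ha]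
  exact h₁.trans h₂.symm

theorem isSelfAdjoint (h : IsMoorePenroseInverse_s16 a g) (ha : IsSelfAdjoint a) :
    IsSelfAdjoint g := by
  have hg : star g = star g * a * star g := by
    simpa only [star_mul, ha.star_eq, mul_assoc] using (congrArg star h.inv_mul_inv).symm
  calc star g = g * a * star g := by
        conv_lhs => rw [hg, h.star_inv_mul ha, (h.commute ha).eq]
    _ = g * (a * g) := by rw [mul_assoc, h.mul_star_inv ha, (h.commute ha).eq]
    _ = g := by rw [← mul_assoc, h.inv_mul_inv]

end IsMoorePenroseInverse_s16

open scoped MatrixOrder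

namespace Matrix

variable {m n p q 𝕜 : Type*} [Fintype n] [DecidableEq n] [RCLike 𝕜]

theorem mul_eq_zero_of_range_inf_eq_bot [Fintype p] [DecidableEq p] [Fintype q] [DecidableEq q]
    {A : Matrix m n 𝕜} {B : Matrix m p 𝕜} {X : Matrix n q 𝕜} {Y : Matrix p q 𝕜}
    (hAB : LinearMap.range (toEuclideanLin A) ⊓ LinearMap.range (toEuclideanLin B) = ⊥)
    (h : A * X = B * Y) : A * X = 0 := by
  have hle : LinearMap.range (toEuclideanLin (A * X)) ≤
      LinearMap.range (toEuclideanLin A) ⊓ LinearMap.range (toEuclideanLin B) :=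
    le_inf (by rw [toLpLin_mul_same]; exact LinearMap.range_comp_le_range _ _)
      (by rw [h, toLpLin_mul_same]; exact LinearMap.range_comp_le_range _ _)
  rw [hAB, le_bot_iff, LinearMap.range_eq_bot] at hle
  exact toEuclideanLin.map_eq_zero_iff.1 hle

namespace PosSemidef

variable {A γ δ g : Matrix n n 𝕜}

theorem sqrt_eq_cfcSqrt (hA : A.PosSemidef) : hA.sqrt = CFC.sqrt A := by
  rw [CFC.sqrt_eq_cfc, cfc_nnreal_eq_real _ A, hA.1.cfc_eq]
  simp [IsHermitian.cfc, PosSemidef.sqrt, Unitary.conjStarAlgAut_apply, Function.comp_def,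
    hA.eigenvalues_nonneg]

theorem isHermitian_sqrt (hA : A.PosSemidef) : hA.sqrt.IsHermitian := by
  rw [sqrt_eq_cfcSqrt]
  exact (CFC.sqrt_nonneg A).posSemidef.isHermitian

theorem sqrt_mul_sqrt (hA : A.PosSemidef) : hA.sqrt * hA.sqrt = A := by
  rw [sqrt_eq_cfcSqrt, CFC.sqrt_mul_sqrt_self A hA.nonneg]

theorem mul_sqrt_eq_of_mul_eq [Fintype m] (hA : A.PosSemidef) {X Y : Matrix m n 𝕜}
    (h : X * A = Y * A) : X * hA.sqrt = Y * hA.sqrt := by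
  rw [← sub_eq_zero, ← Matrix.sub_mul, ← mul_self_mul_conjTranspose_eq_zero,
    hA.isHermitian_sqrt.eq, sqrt_mul_sqrt, Matrix.sub_mul, h, sub_self]

theorem add_mul_mul_eq_self (hγ : γ.PosSemidef) (hδ : δ.PosSemidef)
    (h : (γ + δ) * g * (γ + δ) = γ + δ) : (γ + δ) * g * γ = γ := by
  set Q := 1 - (γ + δ) * g
  have hQ : Q * (γ + δ) = 0 := by
    rw [Matrix.sub_mul, Matrix.one_mul, h, sub_self]
  have hQγQ : Q * γ * Qᴴ = 0 := by
    refine ((add_eq_zero_iff_of_nonneg (hγ.mul_mul_conjTranspose_same Q).nonneg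
      (hδ.mul_mul_conjTranspose_same Q).nonneg).1 ?_).1
    rw [← Matrix.add_mul, ← Matrix.mul_add, hQ, Matrix.zero_mul]
  have hQs : Q * hγ.sqrt = 0 := by
    rw [← self_mul_conjTranspose_eq_zero, conjTranspose_mul, hγ.isHermitian_sqrt.eq, ← hQγQ,
      ← Matrix.mul_assoc, Matrix.mul_assoc Q, hγ.sqrt_mul_sqrt]
  have hQγ : Q * γ = 0 := by
    calc Q * γ = Q * hγ.sqrt * hγ.sqrt := by rw [Matrix.mul_assoc, hγ.sqrt_mul_sqrt]
      _ = 0 := by rw [hQs, Matrix.zero_mul]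
  rw [Matrix.sub_mul, Matrix.one_mul, sub_eq_zero] at hQγ
  exact hQγ.symm

theorem mul_mul_sqrt_of_range_inf_eq_bot (hγ : γ.PosSemidef) (hδ : δ.PosSemidef)
    (hγδ : LinearMap.range (toEuclideanLin γ) ⊓ LinearMap.range (toEuclideanLin δ) = ⊥)
    (h : (γ + δ) * g * (γ + δ) = γ + δ) :
    γ * g * hγ.sqrt = hγ.sqrt ∧ δ * g * hγ.sqrt = 0 := by
  have hproj := hγ.add_mul_mul_eq_self hδ h
  have hδγ : δ * (g * γ) = 0 := by
    refine mul_eq_zero_of_range_inf_eq_bot (Y := 1 - g * γ) (by rwa [inf_comm]) ?_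
    calc δ * (g * γ) = (γ + δ) * g * γ - γ * (g * γ) := by noncomm_ring
      _ = γ * (1 - g * γ) := by rw [hproj]; noncomm_ring
  have hγγ : γ * g * γ = 1 * γ := by
    calc γ * g * γ = (γ + δ) * g * γ - δ * (g * γ) := by noncomm_ring
      _ = 1 * γ := by rw [hproj, hδγ, sub_zero, Matrix.one_mul]
  have hδγ' : δ * g * γ = 0 * γ := by rw [Matrix.mul_assoc, hδγ, Matrix.zero_mul]
  exact ⟨by simpa using hγ.mul_sqrt_eq_of_mul_eq hγγ,
    by simpa using hγ.mul_sqrt_eq_of_mul_eq hδγ'⟩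

end PosSemidef

end Matrix

theorem IsSelfAdjoint.mul_mul_self_mul_eq {R : Type*} [Monoid R] [StarMul R] {E a b U : R}
    (hE : IsSelfAdjoint E) (ha : IsSelfAdjoint a) (hb : IsSelfAdjoint b) (hU : U * star U = 1)
    (h : E * a = E * b * U) : E * (a * a) * E = E * (b * b) * E := by
  have h' : a * E = star U * b * E := by
    simpa only [star_mul, hE.star_eq, ha.star_eq, hb.star_eq, mul_assoc] using congrArg star h
  calc E * (a * a) * E = E * a * (a * E) := by simp only [mul_assoc]
    _ = E * b * (U * star U) * b * E := by rw [h, h']; simp only [mul_assoc]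
    _ = E * (b * b) * E := by rw [hU, mul_one]; simp only [mul_assoc]

section Fidelity

variable {R : Type*} [Ring R] [StarRing R] {s₁ s₂ γ₁ γ₂ F₁ F₂ g U : R}

/-- The operator `E₍?₎` of the paper, with `sᵢ = √γᵢ` and `g = (γ₁ + γ₂)⁻`. -/
def fidelityMeasurement (g s₁ s₂ γ₁ γ₂ F₁ F₂ : R) : R :=
  1 - g * (s₁ * (γ₁ - F₁) * s₁ + s₂ * (γ₂ - F₂) * s₂) * g

theorem fidelity_mul_mul_sqrt (hs₁ : IsSelfAdjoint s₁) (hs₂ : IsSelfAdjoint s₂)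
    (hγ₁ : s₁ * s₁ = γ₁) (hγ₂ : s₂ * s₂ = γ₂) (hF₁ : s₁ * s₂ * U = F₁)
    (hF₂ : s₂ * s₁ * star U = F₂) (hF₁sa : IsSelfAdjoint F₁) (hF₂sa : IsSelfAdjoint F₂)
    (h₁₁ : γ₁ * g * s₁ = s₁) (h₂₁ : γ₂ * g * s₁ = 0) :
    (s₁ * (γ₁ - F₁) * s₁ + s₂ * (γ₂ - F₂) * s₂) * g * s₁ = γ₁ * (s₁ - s₂ * U) := by
  have hF₁' : F₁ = star U * s₂ * s₁ := by
    rw [← hF₁sa.star_eq, ← hF₁]; simp only [star_mul, hs₁.star_eq, hs₂.star_eq, mul_assoc]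
  have hF₂' : F₂ = U * s₁ * s₂ := by
    rw [← hF₂sa.star_eq, ← hF₂]
    simp only [star_mul, star_star, hs₁.star_eq, hs₂.star_eq, mul_assoc]
  calc (s₁ * (γ₁ - F₁) * s₁ + s₂ * (γ₂ - F₂) * s₂) * g * s₁
      = (γ₁ - s₁ * star U * s₂) * (γ₁ * g * s₁) + (γ₂ - s₂ * U * s₁) * (γ₂ * g * s₁) := by
        rw [hF₁', hF₂', ← hγ₁, ← hγ₂]; noncomm_ring
    _ = γ₁ * s₁ - s₁ * (star U * s₂ * s₁) := by rw [h₁₁, h₂₁]; noncomm_ring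
    _ = γ₁ * (s₁ - s₂ * U) := by rw [← hF₁', ← hF₁, ← hγ₁]; noncomm_ring

theorem fidelityMeasurement_mul_sqrt (hs₁ : IsSelfAdjoint s₁) (hs₂ : IsSelfAdjoint s₂)
    (hγ₁ : s₁ * s₁ = γ₁) (hγ₂ : s₂ * s₂ = γ₂) (hU : star U * U = 1) (hF₁ : s₁ * s₂ * U = F₁)
    (hF₂ : U * s₁ * s₂ = F₂) (hF₁sa : IsSelfAdjoint F₁) (hF₂sa : IsSelfAdjoint F₂)
    (h₁₁ : γ₁ * g * s₁ = s₁) (h₂₁ : γ₂ * g * s₁ = 0) (h₁₂ : γ₁ * g * s₂ = 0)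
    (h₂₂ : γ₂ * g * s₂ = s₂) (hg : Commute g (γ₁ + γ₂)) :
    fidelityMeasurement g s₁ s₂ γ₁ γ₂ F₁ F₂ * s₁ =
      fidelityMeasurement g s₁ s₂ γ₁ γ₂ F₁ F₂ * s₂ * U := by
  set A := s₁ * (γ₁ - F₁) * s₁ + s₂ * (γ₂ - F₂) * s₂
  have hF₂' : s₂ * s₁ * star U = F₂ := by
    rw [← hF₂sa.star_eq, ← hF₂]; simp only [star_mul, hs₁.star_eq, hs₂.star_eq, mul_assoc]
  have h₁ : A * g * s₁ = γ₁ * (s₁ - s₂ * U) :=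
    fidelity_mul_mul_sqrt hs₁ hs₂ hγ₁ hγ₂ hF₁ hF₂' hF₁sa hF₂sa h₁₁ h₂₁
  have h₂ : A * g * s₂ = γ₂ * (s₂ - s₁ * star U) := by
    have := fidelity_mul_mul_sqrt hs₂ hs₁ hγ₂ hγ₁ hF₂' (by rwa [star_star]) hF₂sa hF₁sa h₂₂ h₁₂
    rwa [add_comm] at this
  have hA : A * g * (s₁ - s₂ * U) = (γ₁ + γ₂) * (s₁ - s₂ * U) := by
    calc A * g * (s₁ - s₂ * U) = A * g * s₁ - A * g * s₂ * U := by noncomm_ring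
      _ = γ₁ * (s₁ - s₂ * U) + γ₂ * (s₁ * (star U * U) - s₂ * U) := by
          rw [h₁, h₂]; noncomm_ring
      _ = (γ₁ + γ₂) * (s₁ - s₂ * U) := by rw [hU]; noncomm_ring
  have hproj : (γ₁ + γ₂) * g * (s₁ - s₂ * U) = s₁ - s₂ * U := by
    calc (γ₁ + γ₂) * g * (s₁ - s₂ * U)
        = γ₁ * g * s₁ + γ₂ * g * s₁ - (γ₁ * g * s₂ + γ₂ * g * s₂) * U := by noncomm_ring
      _ = s₁ - s₂ * U := by rw [h₁₁, h₂₁, h₁₂, h₂₂]; noncomm_ring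
  rw [← sub_eq_zero]
  calc _ = (s₁ - s₂ * U) - g * (A * g * (s₁ - s₂ * U)) := by
        simp only [fidelityMeasurement, A]; noncomm_ring
    _ = 0 := by rw [hA, ← mul_assoc, hg.eq, hproj, sub_self]

theorem isSelfAdjoint_fidelityMeasurement (hg : IsSelfAdjoint g) (hs₁ : IsSelfAdjoint s₁)
    (hs₂ : IsSelfAdjoint s₂) (hγ₁ : IsSelfAdjoint γ₁) (hγ₂ : IsSelfAdjoint γ₂)
    (hF₁ : IsSelfAdjoint F₁) (hF₂ : IsSelfAdjoint F₂) :
    IsSelfAdjoint (fidelityMeasurement g s₁ s₂ γ₁ γ₂ F₁ F₂) :=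
  .sub (.one R) ((((hγ₁.sub hF₁).conjugate_self hs₁).add
    ((hγ₂.sub hF₂).conjugate_self hs₂)).conjugate_self hg)

end Fidelity

theorem stmt_16_general {n : ℕ} (γ₁ γ₂ g U F₁ F₂ : Matrix (Fin n) (Fin n) ℂ)
    (hγ₁ : γ₁.PosSemidef) (hγ₂ : γ₂.PosSemidef)
    (hdisj : LinearMap.range (Matrix.toEuclideanLin γ₁)
        ⊓ LinearMap.range (Matrix.toEuclideanLin γ₂) = ⊥)
    (hmp1 : (γ₁ + γ₂) * g * (γ₁ + γ₂) = γ₁ + γ₂) (hmp2 : g * (γ₁ + γ₂) * g = g)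
    (hmp3 : ((γ₁ + γ₂) * g)ᴴ = (γ₁ + γ₂) * g) (hmp4 : (g * (γ₁ + γ₂))ᴴ = g * (γ₁ + γ₂))
    (hU : U ∈ Matrix.unitaryGroup (Fin n) ℂ)
    (hF₁ : F₁.PosSemidef)
    (hF₂ : F₂.PosSemidef)
    (hpol₁ : hγ₁.sqrt * hγ₂.sqrt * U = F₁) (hpol₂ : U * hγ₁.sqrt * hγ₂.sqrt = F₂) :
    (1 - g * (hγ₁.sqrt * (γ₁ - F₁) * hγ₁.sqrt + hγ₂.sqrt * (γ₂ - F₂) * hγ₂.sqrt) * g)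
        * hγ₁.sqrt
      = (1 - g * (hγ₁.sqrt * (γ₁ - F₁) * hγ₁.sqrt + hγ₂.sqrt * (γ₂ - F₂) * hγ₂.sqrt) * g)
        * hγ₂.sqrt * U
    ∧ (1 - g * (hγ₁.sqrt * (γ₁ - F₁) * hγ₁.sqrt + hγ₂.sqrt * (γ₂ - F₂) * hγ₂.sqrt) * g)
        * γ₁
        * (1 - g * (hγ₁.sqrt * (γ₁ - F₁) * hγ₁.sqrt + hγ₂.sqrt * (γ₂ - F₂) * hγ₂.sqrt) * g)
      = (1 - g * (hγ₁.sqrt * (γ₁ - F₁) * hγ₁.sqrt + hγ₂.sqrt * (γ₂ - F₂) * hγ₂.sqrt) * g)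
        * γ₂
        * (1 - g * (hγ₁.sqrt * (γ₁ - F₁) * hγ₁.sqrt + hγ₂.sqrt * (γ₂ - F₂) * hγ₂.sqrt) * g) := by
  have hH : IsSelfAdjoint (γ₁ + γ₂) := hγ₁.1.isSelfAdjoint.add hγ₂.1.isSelfAdjoint
  have hg : IsMoorePenroseInverse_s16 (γ₁ + γ₂) g := ⟨hmp1, hmp2, hmp3, hmp4⟩
  have hs₁ : IsSelfAdjoint hγ₁.sqrt := hγ₁.isHermitian_sqrt.isSelfAdjoint
  have hs₂ : IsSelfAdjoint hγ₂.sqrt := hγ₂.isHermitian_sqrt.isSelfAdjoint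
  obtain ⟨h₁₁, h₂₁⟩ := hγ₁.mul_mul_sqrt_of_range_inf_eq_bot hγ₂ hdisj hmp1
  obtain ⟨h₂₂, h₁₂⟩ :=
    hγ₂.mul_mul_sqrt_of_range_inf_eq_bot hγ₁ (by rwa [inf_comm] at hdisj)
      (add_comm γ₁ γ₂ ▸ hmp1)
  have hE : fidelityMeasurement g hγ₁.sqrt hγ₂.sqrt γ₁ γ₂ F₁ F₂ * hγ₁.sqrt =
      fidelityMeasurement g hγ₁.sqrt hγ₂.sqrt γ₁ γ₂ F₁ F₂ * hγ₂.sqrt * U :=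
    fidelityMeasurement_mul_sqrt hs₁ hs₂ hγ₁.sqrt_mul_sqrt hγ₂.sqrt_mul_sqrt
      (Unitary.star_mul_self_of_mem hU) hpol₁ hpol₂ hF₁.1.isSelfAdjoint hF₂.1.isSelfAdjoint
      h₁₁ h₂₁ h₁₂ h₂₂ (hg.commute hH).symm
  have hEsa := isSelfAdjoint_fidelityMeasurement (hg.isSelfAdjoint hH) hs₁ hs₂
    hγ₁.1.isSelfAdjoint hγ₂.1.isSelfAdjoint hF₁.1.isSelfAdjoint hF₂.1.isSelfAdjoint
  have hconj := hEsa.mul_mul_self_mul_eq hs₁ hs₂ (Unitary.mul_star_self_of_mem hU) hE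
  rw [hγ₁.sqrt_mul_sqrt, hγ₂.sqrt_mul_sqrt] at hconj
  exact ⟨hE, hconj⟩

/-- Fidelity form measurement: with `F₁ = √(√γ₁ γ₂ √γ₁)`, `F₂ = √(√γ₂ γ₁ √γ₂)`, a unitary `U`
with `√γ₁√γ₂ U = F₁` and `U√γ₁√γ₂ = F₂`, and `g` the Moore–Penrose inverse of `γ₁+γ₂`,
the operator `E? = 𝟙 − g{√γ₁(γ₁−F₁)√γ₁ + √γ₂(γ₂−F₂)√γ₂}g` satisfies
`E?√γ₁ = E?√γ₂ U` and `E? γ₁ E? = E? γ₂ E?`. -/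
theorem stmt_16 {n : ℕ} (γ₁ γ₂ g U F₁ F₂ : Matrix (Fin n) (Fin n) ℂ)
    (hγ₁ : γ₁.PosSemidef) (hγ₂ : γ₂.PosSemidef)
    (hdisj : LinearMap.range (Matrix.toEuclideanLin γ₁)
        ⊓ LinearMap.range (Matrix.toEuclideanLin γ₂) = ⊥)
    (hmp1 : (γ₁ + γ₂) * g * (γ₁ + γ₂) = γ₁ + γ₂) (hmp2 : g * (γ₁ + γ₂) * g = g)
    (hmp3 : ((γ₁ + γ₂) * g)ᴴ = (γ₁ + γ₂) * g) (hmp4 : (g * (γ₁ + γ₂))ᴴ = g * (γ₁ + γ₂))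
    (hU : U ∈ Matrix.unitaryGroup (Fin n) ℂ)
    (hF₁ : F₁.PosSemidef) (hF₁sq : F₁ * F₁ = hγ₁.sqrt * γ₂ * hγ₁.sqrt)
    (hF₂ : F₂.PosSemidef) (hF₂sq : F₂ * F₂ = hγ₂.sqrt * γ₁ * hγ₂.sqrt)
    (hpol₁ : hγ₁.sqrt * hγ₂.sqrt * U = F₁) (hpol₂ : U * hγ₁.sqrt * hγ₂.sqrt = F₂) :
    (1 - g * (hγ₁.sqrt * (γ₁ - F₁) * hγ₁.sqrt + hγ₂.sqrt * (γ₂ - F₂) * hγ₂.sqrt) * g)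
        * hγ₁.sqrt
      = (1 - g * (hγ₁.sqrt * (γ₁ - F₁) * hγ₁.sqrt + hγ₂.sqrt * (γ₂ - F₂) * hγ₂.sqrt) * g)
        * hγ₂.sqrt * U
    ∧ (1 - g * (hγ₁.sqrt * (γ₁ - F₁) * hγ₁.sqrt + hγ₂.sqrt * (γ₂ - F₂) * hγ₂.sqrt) * g)
        * γ₁
        * (1 - g * (hγ₁.sqrt * (γ₁ - F₁) * hγ₁.sqrt + hγ₂.sqrt * (γ₂ - F₂) * hγ₂.sqrt) * g)
      = (1 - g * (hγ₁.sqrt * (γ₁ - F₁) * hγ₁.sqrt + hγ₂.sqrt * (γ₂ - F₂) * hγ₂.sqrt) * g)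
        * γ₂
        * (1 - g * (hγ₁.sqrt * (γ₁ - F₁) * hγ₁.sqrt + hγ₂.sqrt * (γ₂ - F₂) * hγ₂.sqrt) * g) :=
  stmt_16_general γ₁ γ₂ g U F₁ F₂ hγ₁ hγ₂ hdisj hmp1 hmp2 hmp3 hmp4 hU hF₁ hF₂ hpol₁ hpol₂
end

section
/- Let 𝒜 and ℬ be subspaces of ℂ^d. Then there exist orthonormal bases (a_i) of 𝒜 and (b_j) of ℬ such that ⟨a_i, b_j⟩ = 0 whenever i ≠ j and ⟨a_k, b_k⟩ ≥ 0 for all k (Jordan/canonical bases), obtained via the singular value decomposition of the matrix of inner products of arbitrary orthonormal bases of 𝒜 and ℬ. -/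
/-!
Let `T : 𝒜 → ℬ` be the orthogonal projection onto `ℬ` restricted to `𝒜`, so that
`⟪a, b⟫ = ⟪T a, b⟫` for `a ∈ 𝒜`, `b ∈ ℬ`. A singular value decomposition of `T` consists of an
orthonormal eigenbasis `(a_i)` of `T† T` and an orthonormal basis `(b_j)` of `ℬ` in which
`T a_i = σ_i b_i`: the vectors `T a_i` are pairwise orthogonal with `‖T a_i‖ = σ_i`, and since the
singular values are sorted decreasingly the nonzero ones occur at indices below `rank T ≤ dim ℬ`,
so the normalized nonzero `T a_i` extend to an orthonormal basis of `ℬ` with matching indices.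
Then `⟪a_i, b_j⟫ = σ_i δ_ij` with `σ_i ≥ 0`.
-/

open Module

open scoped InnerProductSpace

theorem Submodule.span_range_coe_basis {R M ι : Type*} [Semiring R] [AddCommMonoid M] [Module R M]
    (K : Submodule R M) (b : Basis ι R K) : span R (Set.range fun i => (b i : M)) = K := by
  rw [show (fun i => (b i : M)) = K.subtype ∘ b from rfl, Set.range_comp, span_image, b.span_eq,
    map_subtype_top]

variable {𝕜 : Type*} [RCLike 𝕜]
  {E : Type*} [NormedAddCommGroup E] [InnerProductSpace 𝕜 E] [FiniteDimensional 𝕜 E]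
  {F : Type*} [NormedAddCommGroup F] [InnerProductSpace 𝕜 F] [FiniteDimensional 𝕜 F]

theorem exists_orthonormalBasis_inner_eq_ite_norm {m : ℕ} {c : Fin m → F}
    (hc : Pairwise fun i j => ⟪c i, c j⟫_𝕜 = 0) (hc0 : ∀ i : Fin m, finrank 𝕜 F ≤ i → c i = 0) :
    ∃ v : OrthonormalBasis (Fin (finrank 𝕜 F)) 𝕜 F,
      ∀ i j, ⟪v j, c i⟫_𝕜 = if (i : ℕ) = j then (‖c i‖ : 𝕜) else 0 := by
  let w : Fin (finrank 𝕜 F) → F := fun j =>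
    if h : (j : ℕ) < m then (‖c ⟨j, h⟩‖⁻¹ : 𝕜) • c ⟨j, h⟩ else 0
  have hw : ∀ i : Fin m, (hi : (i : ℕ) < finrank 𝕜 F) → w ⟨i, hi⟩ = (‖c i‖⁻¹ : 𝕜) • c i :=
    fun i _ => dif_pos i.2
  let s : Set (Fin (finrank 𝕜 F)) := {j | w j ≠ 0}
  have hs : Orthonormal 𝕜 (s.domRestrict w) := by
    have hsw : ∀ j ∈ s, ∃ i : Fin m, (i : ℕ) = j ∧ c i ≠ 0 ∧ w j = (‖c i‖⁻¹ : 𝕜) • c i := by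
      intro j hj
      by_cases h : (j : ℕ) < m
      · refine ⟨⟨j, h⟩, rfl, fun h0 => hj ?_, dif_pos h⟩
        simp [w, h, h0]
      · exact absurd (dif_neg h) hj
    constructor
    · rintro ⟨j, hj⟩
      obtain ⟨i, -, hci, hwj⟩ := hsw j hj
      simpa [hwj] using norm_smul_inv_norm hci
    · rintro ⟨j, hj⟩ ⟨k, hk⟩ hjk
      obtain ⟨i, hi, -, hwj⟩ := hsw j hj
      obtain ⟨i', hi', -, hwk⟩ := hsw k hk
      have hii' : i ≠ i' := fun h => hjk (Subtype.ext (Fin.ext (by rw [← hi, ← hi', h])))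
      simp [hwj, hwk, inner_smul_left, inner_smul_right, hc hii']
  obtain ⟨v, hv⟩ := hs.exists_orthonormalBasis_extension_of_card_eq (by simp)
  refine ⟨v, fun i j => ?_⟩
  by_cases hci : c i = 0
  · simp [hci]
  have hi : (i : ℕ) < finrank 𝕜 F := by
    by_contra! h
    exact hci (hc0 i h)
  have hvi : c i = (‖c i‖ : 𝕜) • v ⟨i, hi⟩ := by
    rw [hv _ (by simp [s, hw i hi, hci]), hw i hi, smul_smul,
      mul_inv_cancel₀ (by simpa using hci), one_smul]
  conv_lhs => rw [hvi, inner_smul_right, orthonormal_iff_ite.mp v.orthonormal]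
  by_cases hij : (i : ℕ) = j
  · rw [if_pos (Fin.ext hij.symm), if_pos hij, mul_one]
  · rw [if_neg (fun h => hij (congrArg Fin.val h).symm), if_neg hij, mul_zero]

theorem LinearMap.exists_orthonormalBasis_inner_apply_eq_singularValues (T : E →ₗ[𝕜] F) :
    ∃ (u : OrthonormalBasis (Fin (finrank 𝕜 E)) 𝕜 E) (v : OrthonormalBasis (Fin (finrank 𝕜 F)) 𝕜 F),
      ∀ i j, ⟪v j, T (u i)⟫_𝕜 = if (i : ℕ) = j then (T.singularValues i : 𝕜) else 0 := by
  let hT := T.isSymmetric_adjoint_comp_self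
  let u := hT.eigenvectorBasis rfl
  have hinner : ∀ i j, ⟪T (u i), T (u j)⟫_𝕜 =
      if i = j then ((T.singularValues i ^ 2 : ℝ) : 𝕜) else 0 := by
    intro i j
    rw [← LinearMap.adjoint_inner_right, ← LinearMap.comp_apply, hT.apply_eigenvectorBasis,
      inner_smul_right, orthonormal_iff_ite.mp u.orthonormal, T.sq_singularValues_fin rfl]
    split_ifs with h <;> simp [h]
  have hnorm : ∀ i, ‖T (u i)‖ = T.singularValues i := by
    intro i
    have h := hinner i i
    rw [if_pos rfl, inner_self_eq_norm_sq_to_K] at h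
    exact (pow_left_inj₀ (norm_nonneg _) (T.singularValues_nonneg i) two_ne_zero).mp
      (by exact_mod_cast h)
  have hzero : ∀ i : Fin (finrank 𝕜 E), finrank 𝕜 F ≤ i → T (u i) = 0 := by
    intro i hi
    rw [← norm_eq_zero, hnorm, T.singularValues_eq_zero_iff_le_finrank_range]
    exact T.range.finrank_le.trans hi
  obtain ⟨v, hv⟩ := exists_orthonormalBasis_inner_eq_ite_norm
    (fun i j hij => by simpa [hij] using hinner i j) hzero
  exact ⟨u, v, fun i j => by rw [hv, hnorm]⟩

theorem Submodule.exists_orthonormalBasis_inner_eq_ite (K L : Submodule 𝕜 E) :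
    ∃ (u : OrthonormalBasis (Fin (finrank 𝕜 K)) 𝕜 K) (v : OrthonormalBasis (Fin (finrank 𝕜 L)) 𝕜 L)
      (σ : ℕ → ℝ), (∀ k, 0 ≤ σ k) ∧
      ∀ i j, ⟪(u i : E), (v j : E)⟫_𝕜 = if (i : ℕ) = j then (σ i : 𝕜) else 0 := by
  let T : K →ₗ[𝕜] L := L.orthogonalProjectionOnto ∘L K.subtypeL
  obtain ⟨u, v, huv⟩ := T.exists_orthonormalBasis_inner_apply_eq_singularValues
  refine ⟨u, v, T.singularValues, T.singularValues_nonneg, fun i j => ?_⟩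
  rw [← inner_conj_symm, ← L.inner_orthogonalProjectionOnto_eq_of_mem_left]
  exact (congrArg (starRingEnd 𝕜) (huv i j)).trans (by split_ifs <;> simp)

/-- Jordan (canonical) bases: for subspaces `𝒜, ℬ` of `ℂ^d` there exist orthonormal bases
`(a_i)` of `𝒜` and `(b_j)` of `ℬ` with `⟨a_i, b_j⟩ = 0` for `i ≠ j` and `⟨a_k, b_k⟩ ≥ 0`. -/
theorem stmt_18 {d : ℕ} (𝒜 ℬ : Submodule ℂ (EuclideanSpace ℂ (Fin d))) :
    ∃ (a : Fin (finrank ℂ 𝒜) → EuclideanSpace ℂ (Fin d))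
      (b : Fin (finrank ℂ ℬ) → EuclideanSpace ℂ (Fin d)),
      Orthonormal ℂ a ∧ Orthonormal ℂ b ∧
      (∀ i, a i ∈ 𝒜) ∧ (∀ j, b j ∈ ℬ) ∧
      Submodule.span ℂ (Set.range a) = 𝒜 ∧ Submodule.span ℂ (Set.range b) = ℬ ∧
      (∀ (i : Fin (finrank ℂ 𝒜)) (j : Fin (finrank ℂ ℬ)),
        (i : ℕ) ≠ (j : ℕ) → (inner ℂ (a i) (b j) : ℂ) = 0) ∧
      (∀ (i : Fin (finrank ℂ 𝒜)) (j : Fin (finrank ℂ ℬ)),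
        (i : ℕ) = (j : ℕ) → ∃ r : ℝ, 0 ≤ r ∧ (inner ℂ (a i) (b j) : ℂ) = (r : ℂ)) := by
  obtain ⟨u, v, σ, hσ, huv⟩ := 𝒜.exists_orthonormalBasis_inner_eq_ite ℬ
  refine ⟨fun i => u i, fun j => v j, u.orthonormal.comp_linearIsometry 𝒜.subtypeₗᵢ,
    v.orthonormal.comp_linearIsometry ℬ.subtypeₗᵢ, fun i => (u i).2, fun j => (v j).2,
    𝒜.span_range_coe_basis u.toBasis, ℬ.span_range_coe_basis v.toBasis,
    fun i j hij => by rw [huv, if_neg hij], fun i j hij => ⟨σ i, hσ i, by rw [huv, if_pos hij]; rfl⟩⟩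
end
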